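/- arXiv:2306.11211 — 7 statements merged into one kernel-verified Lean document; each statement's English description precedes it below -/
import Mathlib

section
/- Let v(x,y) = [∇²_y g(x,y)]⁻¹ ∇_y f(x,y). Then for all x₁, x₂ ∈ ℝ^p and y₁, y₂ ∈ ℝ^q, ‖v(x₁,y₁) − v(x₂,y₂)‖ ≤ (Mρ/μ² + L/μ)·(‖x₁ − x₂‖ + ‖y₁ − y₂‖). -/
open scoped RealInnerProductSpace

/-- **Lemma 1 (joint Lipschitz continuity of `v(x,y) = [∇²_y g(x,y)]⁻¹ ∇_y f(x,y)`).**
`gradyf x y` stands for `∇_y f(x,y)`, `Hess x y` for the Hessian `∇²_y g(x,y)`,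
and `Hinv x y` for its inverse (which exists since `∇²_y g(x,y) ⪰ μ·I`, with
`‖[∇²_y g(x,y)]⁻¹‖ ≤ 1/μ`). -/
theorem stmt_0 {p q : ℕ}
    (μ L M ρ : ℝ) (hμ : 0 < μ) (hL : 0 < L) (hM : 0 < M) (hρ : 0 < ρ)
    (gradyf : EuclideanSpace ℝ (Fin p) → EuclideanSpace ℝ (Fin q) → EuclideanSpace ℝ (Fin q))
    (Hess Hinv : EuclideanSpace ℝ (Fin p) → EuclideanSpace ℝ (Fin q) →
      (EuclideanSpace ℝ (Fin q) →L[ℝ] EuclideanSpace ℝ (Fin q)))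
    (hSelfAdj : ∀ x y, IsSelfAdjoint (Hess x y))
    (hPos : ∀ x y v, μ * ‖v‖ ^ 2 ≤ ⟪Hess x y v, v⟫)
    (hInv₁ : ∀ x y, (Hess x y).comp (Hinv x y) = 1)
    (hInv₂ : ∀ x y, (Hinv x y).comp (Hess x y) = 1)
    (hInvNorm : ∀ x y, ‖Hinv x y‖ ≤ 1 / μ)
    (hfBound : ∀ x y, ‖gradyf x y‖ ≤ M)
    (hfLip : ∀ x₁ x₂ y₁ y₂, ‖gradyf x₁ y₁ - gradyf x₂ y₂‖ ≤ L * (‖x₁ - x₂‖ + ‖y₁ - y₂‖))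
    (hHLip : ∀ x₁ x₂ y₁ y₂, ‖Hess x₁ y₁ - Hess x₂ y₂‖ ≤ ρ * (‖x₁ - x₂‖ + ‖y₁ - y₂‖))
    (v : EuclideanSpace ℝ (Fin p) → EuclideanSpace ℝ (Fin q) → EuclideanSpace ℝ (Fin q))
    (hv : ∀ x y, v x y = Hinv x y (gradyf x y)) :
    ∀ x₁ x₂ y₁ y₂, ‖v x₁ y₁ - v x₂ y₂‖ ≤
      (M * ρ / μ ^ 2 + L / μ) * (‖x₁ - x₂‖ + ‖y₁ - y₂‖) := by
  intro x₁ x₂ y₁ y₂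
  set d : ℝ := ‖x₁ - x₂‖ + ‖y₁ - y₂‖ with hd
  have hd0 : 0 ≤ d := by positivity
  set w := gradyf x₁ y₁ with hw
  -- key identity: Hinv₁ w - Hinv₂ w = Hinv₁ ((H₂ - H₁)(Hinv₂ w))
  have e2 : Hess x₂ y₂ (Hinv x₂ y₂ w) = w := by
    have := ContinuousLinearMap.ext_iff.mp (hInv₁ x₂ y₂) w
    simpa using this
  have e1 : Hinv x₁ y₁ (Hess x₁ y₁ (Hinv x₂ y₂ w)) = Hinv x₂ y₂ w := by
    have := ContinuousLinearMap.ext_iff.mp (hInv₂ x₁ y₁) (Hinv x₂ y₂ w)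
    simpa using this
  have key : Hinv x₁ y₁ w - Hinv x₂ y₂ w
      = Hinv x₁ y₁ ((Hess x₂ y₂ - Hess x₁ y₁) (Hinv x₂ y₂ w)) := by
    rw [ContinuousLinearMap.sub_apply, map_sub, e2, e1]
  have decomp : v x₁ y₁ - v x₂ y₂
      = Hinv x₁ y₁ ((Hess x₂ y₂ - Hess x₁ y₁) (Hinv x₂ y₂ w))
        + Hinv x₂ y₂ (w - gradyf x₂ y₂) := by
    rw [hv, hv, ← key, map_sub]; abel
  have hμ' : 0 ≤ 1 / μ := by positivity
  have b1 : ‖Hinv x₁ y₁ ((Hess x₂ y₂ - Hess x₁ y₁) (Hinv x₂ y₂ w))‖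
      ≤ (1 / μ) * ((ρ * d) * ((1 / μ) * M)) := by
    calc ‖Hinv x₁ y₁ ((Hess x₂ y₂ - Hess x₁ y₁) (Hinv x₂ y₂ w))‖
        ≤ ‖Hinv x₁ y₁‖ * ‖(Hess x₂ y₂ - Hess x₁ y₁) (Hinv x₂ y₂ w)‖ :=
          ContinuousLinearMap.le_opNorm _ _
      _ ≤ (1 / μ) * ((ρ * d) * ((1 / μ) * M)) := by
          apply mul_le_mul (hInvNorm _ _) ?_ (norm_nonneg _) hμ'
          calc ‖(Hess x₂ y₂ - Hess x₁ y₁) (Hinv x₂ y₂ w)‖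
              ≤ ‖Hess x₂ y₂ - Hess x₁ y₁‖ * ‖Hinv x₂ y₂ w‖ :=
                ContinuousLinearMap.le_opNorm _ _
            _ ≤ (ρ * d) * ((1 / μ) * M) := by
                apply mul_le_mul ?_ ?_ (norm_nonneg _) (by positivity)
                · have := hHLip x₂ x₁ y₂ y₁
                  rw [norm_sub_rev x₂ x₁, norm_sub_rev y₂ y₁] at this
                  exact this
                · calc ‖Hinv x₂ y₂ w‖ ≤ ‖Hinv x₂ y₂‖ * ‖w‖ :=
                        ContinuousLinearMap.le_opNorm _ _
                    _ ≤ (1 / μ) * M :=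
                        mul_le_mul (hInvNorm _ _) (hfBound _ _) (norm_nonneg _) hμ'
  have b2 : ‖Hinv x₂ y₂ (w - gradyf x₂ y₂)‖ ≤ (1 / μ) * (L * d) := by
    calc ‖Hinv x₂ y₂ (w - gradyf x₂ y₂)‖
        ≤ ‖Hinv x₂ y₂‖ * ‖w - gradyf x₂ y₂‖ := ContinuousLinearMap.le_opNorm _ _
      _ ≤ (1 / μ) * (L * d) :=
          mul_le_mul (hInvNorm _ _) (hfLip x₁ x₂ y₁ y₂) (norm_nonneg _) hμ'
  calc ‖v x₁ y₁ - v x₂ y₂‖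
      ≤ ‖Hinv x₁ y₁ ((Hess x₂ y₂ - Hess x₁ y₁) (Hinv x₂ y₂ w))‖
        + ‖Hinv x₂ y₂ (w - gradyf x₂ y₂)‖ := by rw [decomp]; exact norm_add_le _ _
    _ ≤ (1 / μ) * ((ρ * d) * ((1 / μ) * M)) + (1 / μ) * (L * d) := add_le_add b1 b2
    _ = (M * ρ / μ ^ 2 + L / μ) * d := by field_simp
end

section
/- E[Φ(x − α h)] ≤ Φ(x) − (α/2)‖∇Φ(x)‖² − (α/2 − (L_Φ/2)α²)‖h̄‖² + (α/2)‖∇Φ(x) − h̄‖² + (L_Φ/2)α² · E[‖h − h̄‖²]. -/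
open MeasureTheory ProbabilityTheory

open MeasureTheory ProbabilityTheory

/-- Descent lemma: a function with `L`-Lipschitz gradient satisfies the quadratic upper bound. -/
lemma descent_aux {p : ℕ} (Φ : EuclideanSpace ℝ (Fin p) → ℝ)
    (gradΦ : EuclideanSpace ℝ (Fin p) → EuclideanSpace ℝ (Fin p)) (LΦ : ℝ) (hLΦ : 0 ≤ LΦ)
    (hgrad : ∀ u, HasGradientAt Φ (gradΦ u) u)
    (hLip : ∀ u w, ‖gradΦ u - gradΦ w‖ ≤ LΦ * ‖u - w‖)
    (x y : EuclideanSpace ℝ (Fin p)) :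
    Φ y ≤ Φ x + inner ℝ (gradΦ x) (y - x) + LΦ / 2 * ‖y - x‖ ^ 2 := by
  set d := y - x with hd
  -- gradΦ is continuous
  have hc : Continuous gradΦ := by
    refine (LipschitzWith.of_dist_le_mul (K := ⟨LΦ, hLΦ⟩) ?_).continuous
    intro u w
    rw [dist_eq_norm, dist_eq_norm]; exact hLip u w
  have hline : ∀ t : ℝ, HasDerivAt (fun t : ℝ => x + t • d) d t := by
    intro t
    simpa using ((hasDerivAt_id t).smul_const d).const_add x
  have hderiv : ∀ t : ℝ,
      HasDerivAt (fun t : ℝ => Φ (x + t • d)) (inner ℝ (gradΦ (x + t • d)) d : ℝ) t := by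
    intro t
    have hf := (hasGradientAt_iff_hasFDerivAt.mp (hgrad (x + t • d)))
    have := hf.comp_hasDerivAt t (hline t)
    simpa using (by exact this)
  have hcont : Continuous fun t : ℝ => (inner ℝ (gradΦ (x + t • d)) d : ℝ) := by
    exact (Continuous.inner (hc.comp (continuous_const.add (continuous_id.smul continuous_const))) continuous_const)
  have key : Φ (x + (1:ℝ) • d) - Φ (x + (0:ℝ) • d)
      = ∫ t in (0:ℝ)..1, (inner ℝ (gradΦ (x + t • d)) d : ℝ) := by
    exact (intervalIntegral.integral_eq_sub_of_hasDerivAt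
      (fun t _ => hderiv t) (hcont.intervalIntegrable 0 1)).symm
  have hbound : ∀ t ∈ Set.Icc (0:ℝ) 1,
      (inner ℝ (gradΦ (x + t • d)) d : ℝ) ≤ inner ℝ (gradΦ x) d + LΦ * ‖d‖ ^ 2 * t := by
    intro t ht
    have h1 : (inner ℝ (gradΦ (x + t • d)) d : ℝ) - inner ℝ (gradΦ x) d
        = inner ℝ (gradΦ (x + t • d) - gradΦ x) d := by
      rw [inner_sub_left]
    have h2 : (inner ℝ (gradΦ (x + t • d) - gradΦ x) d : ℝ)
        ≤ ‖gradΦ (x + t • d) - gradΦ x‖ * ‖d‖ := real_inner_le_norm _ _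
    have h3 : ‖gradΦ (x + t • d) - gradΦ x‖ ≤ LΦ * (t * ‖d‖) := by
      have := hLip (x + t • d) x
      simpa [norm_smul, abs_of_nonneg ht.1] using this
    nlinarith [norm_nonneg d, mul_le_mul_of_nonneg_right h3 (norm_nonneg d)]
  have hInt2 : IntervalIntegrable (fun t : ℝ => inner ℝ (gradΦ x) d + LΦ * ‖d‖ ^ 2 * t)
      MeasureTheory.volume 0 1 :=
    (continuous_const.add (continuous_const.mul continuous_id)).intervalIntegrable 0 1
  have hmono := intervalIntegral.integral_mono_on (by norm_num : (0:ℝ) ≤ 1)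
    (hcont.intervalIntegrable 0 1) hInt2 hbound
  have hval : ∫ t in (0:ℝ)..1, (inner ℝ (gradΦ x) d + LΦ * ‖d‖ ^ 2 * t)
      = inner ℝ (gradΦ x) d + LΦ / 2 * ‖d‖ ^ 2 := by
    rw [intervalIntegral.integral_add (intervalIntegrable_const)
      ((by fun_prop : Continuous fun t : ℝ => LΦ * ‖d‖ ^ 2 * t).intervalIntegrable 0 1),
      intervalIntegral.integral_const_mul]
    simp [integral_id]
    ring
  have : Φ y - Φ x ≤ inner ℝ (gradΦ x) d + LΦ / 2 * ‖d‖ ^ 2 := by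
    have e1 : x + (1:ℝ) • d = y := by rw [hd]; simp
    have e0 : x + (0:ℝ) • d = x := by simp
    rw [e1, e0] at key
    rw [key]
    exact hmono.trans (le_of_eq hval)
  linarith

/-- **Lemma 3 (expected descent of a smooth function along a stochastic step).**
`∇Φ` is `L_Φ`-Lipschitz, `h` is a square-integrable random vector with mean `h̄`; then
`E[Φ(x − α h)] ≤ Φ(x) − (α/2)‖∇Φ(x)‖² − (α/2 − (L_Φ/2)α²)‖h̄‖²
  + (α/2)‖∇Φ(x) − h̄‖² + (L_Φ/2)α² E[‖h − h̄‖²]`. -/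
theorem stmt_2 {p : ℕ} {Ω : Type*} [MeasureSpace Ω] [IsProbabilityMeasure (ℙ : Measure Ω)]
    (Φ : EuclideanSpace ℝ (Fin p) → ℝ) (gradΦ : EuclideanSpace ℝ (Fin p) → EuclideanSpace ℝ (Fin p))
    (LΦ : ℝ) (hLΦ : 0 < LΦ)
    (hgrad : ∀ u, HasGradientAt Φ (gradΦ u) u)
    (hLip : ∀ u w, ‖gradΦ u - gradΦ w‖ ≤ LΦ * ‖u - w‖)
    (h : Ω → EuclideanSpace ℝ (Fin p)) (hh : MemLp h 2 (ℙ : Measure Ω))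
    (hbar : EuclideanSpace ℝ (Fin p)) (hhbar : hbar = ∫ ω, h ω)
    (α : ℝ) (hα : 0 < α) (x : EuclideanSpace ℝ (Fin p)) :
    ∫ ω, Φ (x - α • h ω) ≤
      Φ x - (α / 2) * ‖gradΦ x‖ ^ 2 - (α / 2 - LΦ / 2 * α ^ 2) * ‖hbar‖ ^ 2
        + (α / 2) * ‖gradΦ x - hbar‖ ^ 2 + LΦ / 2 * α ^ 2 * ∫ ω, ‖h ω - hbar‖ ^ 2 := by

  have hΦcont : Continuous Φ :=
    continuous_iff_continuousAt.mpr fun u => (hgrad u).differentiableAt.continuousAt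
  set g := gradΦ x with hgdef
  have hhi : Integrable h (ℙ : Measure Ω) := hh.integrable (by norm_num)
  have hsq : Integrable (fun ω => ‖h ω‖ ^ 2) (ℙ : Measure Ω) := by
    have := hh.integrable_norm_rpow (by norm_num) (by norm_num)
    simpa [ENNReal.toReal_ofNat, Real.rpow_natCast] using this
  have hsub : Integrable (fun ω => h ω - hbar) (ℙ : Measure Ω) := hhi.sub (integrable_const _)
  have hsq2 : Integrable (fun ω => ‖h ω - hbar‖ ^ 2) (ℙ : Measure Ω) := by
    have := (hh.sub (memLp_const hbar)).integrable_norm_rpow (by norm_num) (by norm_num)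
    simpa [ENNReal.toReal_ofNat, Real.rpow_natCast] using this
  -- pointwise two-sided descent bounds
  have hub : ∀ ω, Φ (x - α • h ω) ≤
      Φ x - α * inner ℝ g (h ω) + LΦ / 2 * α ^ 2 * ‖h ω‖ ^ 2 := by
    intro ω
    have := descent_aux Φ gradΦ LΦ hLΦ.le hgrad hLip x (x - α • h ω)
    have e : x - α • h ω - x = -(α • h ω) := by abel
    rw [e] at this
    have e2 : (inner ℝ g (-(α • h ω)) : ℝ) = -(α * inner ℝ g (h ω)) := by
      rw [inner_neg_right, real_inner_smul_right]
    have e3 : ‖-(α • h ω)‖ ^ 2 = α ^ 2 * ‖h ω‖ ^ 2 := by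
      rw [norm_neg, norm_smul, Real.norm_eq_abs, abs_of_pos hα, mul_pow]
    rw [e2, e3] at this
    linarith
  have hlb : ∀ ω, Φ x - α * inner ℝ g (h ω) - LΦ / 2 * α ^ 2 * ‖h ω‖ ^ 2 ≤
      Φ (x - α • h ω) := by
    intro ω
    have hgradneg : ∀ u, HasGradientAt (fun u => -Φ u) (-gradΦ u) u := by
      intro u
      rw [hasGradientAt_iff_hasFDerivAt, map_neg]
      exact (hasGradientAt_iff_hasFDerivAt.mp (hgrad u)).neg
    have hLipneg : ∀ u w, ‖-gradΦ u - -gradΦ w‖ ≤ LΦ * ‖u - w‖ := by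
      intro u w
      have := hLip u w
      have e : -gradΦ u - -gradΦ w = -(gradΦ u - gradΦ w) := by abel
      rw [e, norm_neg]
      exact this
    have := descent_aux (fun u => -Φ u) (fun u => -gradΦ u) LΦ hLΦ.le hgradneg hLipneg
      x (x - α • h ω)
    have e : x - α • h ω - x = -(α • h ω) := by abel
    rw [e] at this
    have e2 : (inner ℝ (-g) (-(α • h ω)) : ℝ) = α * inner ℝ g (h ω) := by
      rw [inner_neg_neg, real_inner_smul_right]
    have e3 : ‖-(α • h ω)‖ ^ 2 = α ^ 2 * ‖h ω‖ ^ 2 := by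
      rw [norm_neg, norm_smul, Real.norm_eq_abs, abs_of_pos hα, mul_pow]
    simp only [hgdef] at e2
    rw [e2, e3] at this
    linarith
  -- integrability of the composed function
  have hmeas : AEStronglyMeasurable (fun ω => Φ (x - α • h ω)) (ℙ : Measure Ω) :=
    hΦcont.comp_aestronglyMeasurable
      (aestronglyMeasurable_const.sub (hh.aestronglyMeasurable.const_smul α))
  have hintb : Integrable (fun ω => |Φ x| + α * ‖g‖ * ‖h ω‖ + LΦ / 2 * α ^ 2 * ‖h ω‖ ^ 2)
      (ℙ : Measure Ω) :=
    ((integrable_const _).add (hhi.norm.const_mul _)).add (hsq.const_mul _)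
  have hintΦ : Integrable (fun ω => Φ (x - α • h ω)) (ℙ : Measure Ω) := by
    refine hintb.mono' hmeas (Filter.Eventually.of_forall fun ω => ?_)
    have h1 := hub ω
    have h2 := hlb ω
    have h3 := abs_real_inner_le_norm g (h ω)
    have h4 : 0 ≤ LΦ / 2 * α ^ 2 * ‖h ω‖ ^ 2 := by positivity
    rw [Real.norm_eq_abs, abs_le]
    constructor <;> [skip; skip] <;>
      · rw [abs_le] at h3
        cases' abs_cases (Φ x) with hc hc <;> nlinarith [hα.le]
  have hintU : Integrable (fun ω => Φ x - α * inner ℝ g (h ω) + LΦ / 2 * α ^ 2 * ‖h ω‖ ^ 2)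
      (ℙ : Measure Ω) :=
    ((integrable_const _).sub ((hhi.const_inner g).const_mul α)).add (hsq.const_mul _)
  have hmono := integral_mono hintΦ hintU (fun ω => hub ω)
  have hIU : ∫ ω, (Φ x - α * inner ℝ g (h ω) + LΦ / 2 * α ^ 2 * ‖h ω‖ ^ 2)
      = Φ x - α * inner ℝ g hbar + LΦ / 2 * α ^ 2 * ∫ ω, ‖h ω‖ ^ 2 := by
    have hI1 : Integrable (fun ω => Φ x - α * inner ℝ g (h ω)) (ℙ : Measure Ω) :=
      (integrable_const _).sub ((hhi.const_inner g).const_mul α)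
    have hI2 : Integrable (fun ω => LΦ / 2 * α ^ 2 * ‖h ω‖ ^ 2) (ℙ : Measure Ω) :=
      hsq.const_mul _
    have hI3 : Integrable (fun ω => (α * inner ℝ g (h ω) : ℝ)) (ℙ : Measure Ω) :=
      (hhi.const_inner g).const_mul α
    rw [integral_add hI1 hI2, integral_sub (integrable_const _) hI3,
      integral_const, integral_const_mul, integral_const_mul, integral_inner hhi g]
    simp [hhbar]
  -- variance decomposition
  have hmean0 : (∫ ω, (h ω - hbar)) = 0 := by
    rw [integral_sub hhi (integrable_const _), integral_const]
    simp [hhbar]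
  have hvar : (∫ ω, ‖h ω‖ ^ 2) = (∫ ω, ‖h ω - hbar‖ ^ 2) + ‖hbar‖ ^ 2 := by
    have hpt : ∀ ω, ‖h ω‖ ^ 2
        = ‖h ω - hbar‖ ^ 2 + 2 * inner ℝ (h ω - hbar) hbar + ‖hbar‖ ^ 2 := by
      intro ω
      have := norm_add_sq_real (h ω - hbar) hbar
      rwa [sub_add_cancel] at this
    calc (∫ ω, ‖h ω‖ ^ 2)
        = ∫ ω, (‖h ω - hbar‖ ^ 2 + 2 * inner ℝ (h ω - hbar) hbar + ‖hbar‖ ^ 2) := by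
          exact integral_congr_ae (Filter.Eventually.of_forall hpt)
      _ = (∫ ω, ‖h ω - hbar‖ ^ 2) + (∫ ω, (2 * inner ℝ (h ω - hbar) hbar : ℝ))
            + ‖hbar‖ ^ 2 := by
          have hJ1 : Integrable (fun ω => (2 * inner ℝ (h ω - hbar) hbar : ℝ)) (ℙ : Measure Ω) :=
            (hsub.inner_const hbar).const_mul 2
          have hJ2 : Integrable
              (fun ω => ‖h ω - hbar‖ ^ 2 + (2 * inner ℝ (h ω - hbar) hbar : ℝ)) (ℙ : Measure Ω) :=
            hsq2.add hJ1
          rw [integral_add hJ2 (integrable_const _), integral_add hsq2 hJ1, integral_const]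
          simp
      _ = (∫ ω, ‖h ω - hbar‖ ^ 2) + ‖hbar‖ ^ 2 := by
          have : (∫ ω, (inner ℝ (h ω - hbar) hbar : ℝ)) = 0 := by
            have hcomm : ∀ ω, (inner ℝ (h ω - hbar) hbar : ℝ) = inner ℝ hbar (h ω - hbar) := fun ω =>
              real_inner_comm _ _
            rw [integral_congr_ae (Filter.Eventually.of_forall hcomm), integral_inner hsub hbar,
              hmean0, inner_zero_right]
          rw [integral_const_mul, this]
          ring
  -- final algebra
  have hexp : ‖g - hbar‖ ^ 2 = ‖g‖ ^ 2 - 2 * inner ℝ g hbar + ‖hbar‖ ^ 2 := norm_sub_sq_real g hbar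
  calc ∫ ω, Φ (x - α • h ω)
      ≤ Φ x - α * inner ℝ g hbar + LΦ / 2 * α ^ 2 * ∫ ω, ‖h ω‖ ^ 2 := by rw [← hIU]; exact hmono
    _ = Φ x - (α / 2) * ‖g‖ ^ 2 - (α / 2 - LΦ / 2 * α ^ 2) * ‖hbar‖ ^ 2
        + (α / 2) * ‖g - hbar‖ ^ 2 + LΦ / 2 * α ^ 2 * ∫ ω, ‖h ω - hbar‖ ^ 2 := by
        rw [hvar, hexp]; ring
end

section
/- For all y ∈ ℝ^q and w ∈ ℝ^q, ‖(∇_x f(x,y*) − J(x,y*) v*) − (∇_x f(x,y) − J(x,y) w)‖ ≤ (L + Mτ/μ)‖y − y*‖ + L‖w − v*‖. -/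
open scoped RealInnerProductSpace

theorem norm_sub_apply_sub_sub_apply_le {𝕜 E F : Type*} [NontriviallyNormedField 𝕜]
    [SeminormedAddCommGroup E] [NormedSpace 𝕜 E] [SeminormedAddCommGroup F] [NormedSpace 𝕜 F]
    (a b : F) (A B : E →L[𝕜] F) (v w : E) :
    ‖(a - A v) - (b - B w)‖ ≤ ‖a - b‖ + ‖A - B‖ * ‖v‖ + ‖B‖ * ‖w - v‖ := by
  have split : (a - A v) - (b - B w) = (a - b) - (A - B) v + B (w - v) := by
    simp only [sub_apply, map_sub]
    abel
  calc ‖(a - A v) - (b - B w)‖ ≤ ‖a - b‖ + ‖(A - B) v‖ + ‖B (w - v)‖ := by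
        rw [split]
        exact (norm_add_le _ _).trans (by gcongr; exact norm_sub_le _ _)
    _ ≤ ‖a - b‖ + ‖A - B‖ * ‖v‖ + ‖B‖ * ‖w - v‖ := by
        gcongr
        · exact (A - B).le_opNorm v
        · exact B.le_opNorm (w - v)

theorem stmt_3_general {p q : ℕ}
    (μ L M τ : ℝ)
    (ystar : EuclideanSpace ℝ (Fin q))
    (gradxf : EuclideanSpace ℝ (Fin q) → EuclideanSpace ℝ (Fin p))
    (J : EuclideanSpace ℝ (Fin q) → (EuclideanSpace ℝ (Fin q) →L[ℝ] EuclideanSpace ℝ (Fin p)))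
    (hgradxfLip : ∀ y₁ y₂, ‖gradxf y₁ - gradxf y₂‖ ≤ L * ‖y₁ - y₂‖)
    (hJBound : ∀ y, ‖J y‖ ≤ L)
    (hJLip : ∀ y₁ y₂, ‖J y₁ - J y₂‖ ≤ τ * ‖y₁ - y₂‖)
    (vstar : EuclideanSpace ℝ (Fin q))
    (hvstarBound : ‖vstar‖ ≤ M / μ) :
    ∀ (y w : EuclideanSpace ℝ (Fin q)),
      ‖(gradxf ystar - J ystar vstar) - (gradxf y - J y w)‖ ≤
        (L + M * τ / μ) * ‖y - ystar‖ + L * ‖w - vstar‖ := by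
  intro y w
  have hgradxf : ‖gradxf ystar - gradxf y‖ ≤ L * ‖y - ystar‖ :=
    norm_sub_rev y ystar ▸ hgradxfLip ystar y
  have hJ : ‖J ystar - J y‖ ≤ τ * ‖y - ystar‖ := norm_sub_rev y ystar ▸ hJLip ystar y
  calc ‖(gradxf ystar - J ystar vstar) - (gradxf y - J y w)‖
      ≤ ‖gradxf ystar - gradxf y‖ + ‖J ystar - J y‖ * ‖vstar‖ + ‖J y‖ * ‖w - vstar‖ :=
        norm_sub_apply_sub_sub_apply_le _ _ _ _ _ _
    _ ≤ L * ‖y - ystar‖ + τ * ‖y - ystar‖ * (M / μ) + L * ‖w - vstar‖ := by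
        gcongr
        · exact (norm_nonneg _).trans hJ
        · exact hJBound y
    _ = (L + M * τ / μ) * ‖y - ystar‖ + L * ‖w - vstar‖ := by ring

/-- **Lemma 4 (pointwise hypergradient approximation error).**
With `x` fixed, `gradxf y = ∇_x f(x,y)`, `gradyf y = ∇_y f(x,y)`,
`J y = ∇_x∇_y g(x,y)`, `Hess y = ∇²_y g(x,y)`, `Hinv = [∇²_y g(x,y*)]⁻¹` and
`v* = [∇²_y g(x,y*)]⁻¹ ∇_y f(x,y*)`: for all `y, w`,
`‖(∇_x f(x,y*) − J(x,y*) v*) − (∇_x f(x,y) − J(x,y) w)‖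
  ≤ (L + Mτ/μ)‖y − y*‖ + L‖w − v*‖`. -/
theorem stmt_3 {p q : ℕ}
    (μ L M τ : ℝ) (hμ : 0 < μ) (hL : 0 < L) (hM : 0 < M) (hτ : 0 < τ)
    (ystar : EuclideanSpace ℝ (Fin q))
    (gradxf : EuclideanSpace ℝ (Fin q) → EuclideanSpace ℝ (Fin p))
    (gradyf : EuclideanSpace ℝ (Fin q) → EuclideanSpace ℝ (Fin q))
    (J : EuclideanSpace ℝ (Fin q) → (EuclideanSpace ℝ (Fin q) →L[ℝ] EuclideanSpace ℝ (Fin p)))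
    (Hess : EuclideanSpace ℝ (Fin q) →
      (EuclideanSpace ℝ (Fin q) →L[ℝ] EuclideanSpace ℝ (Fin q)))
    (Hinv : EuclideanSpace ℝ (Fin q) →L[ℝ] EuclideanSpace ℝ (Fin q))
    (hPos : ∀ y w, μ * ‖w‖ ^ 2 ≤ ⟪Hess y w, w⟫)
    (hInv₁ : (Hess ystar).comp Hinv = 1)
    (hInv₂ : Hinv.comp (Hess ystar) = 1)
    (hInvNorm : ‖Hinv‖ ≤ 1 / μ)
    (hgradyfBound : ∀ y, ‖gradyf y‖ ≤ M)
    (hgradxfLip : ∀ y₁ y₂, ‖gradxf y₁ - gradxf y₂‖ ≤ L * ‖y₁ - y₂‖)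
    (hJBound : ∀ y, ‖J y‖ ≤ L)
    (hJLip : ∀ y₁ y₂, ‖J y₁ - J y₂‖ ≤ τ * ‖y₁ - y₂‖)
    (vstar : EuclideanSpace ℝ (Fin q)) (hvstar : vstar = Hinv (gradyf ystar))
    (hvstarBound : ‖vstar‖ ≤ M / μ) :
    ∀ (y w : EuclideanSpace ℝ (Fin q)),
      ‖(gradxf ystar - J ystar vstar) - (gradxf y - J y w)‖ ≤
        (L + M * τ / μ) * ‖y - ystar‖ + L * ‖w - vstar‖ :=
  stmt_3_general μ L M τ ystar gradxf J hgradxfLip hJBound hJLip vstar hvstarBound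
end

section
/- For every deterministic vector v* ∈ ℝ^q, E[‖(a − A v) − (ā − Ā·E[v])‖²] ≤ σ_a² + (2M²/μ²)·σ_A² + 2L²·E[‖v − v*‖²]. -/
open MeasureTheory ProbabilityTheory

local notation "⟪" x ", " y "⟫" => @inner ℝ _ _ x y

section helpers
variable {Ω : Type*} [MeasureSpace Ω]

lemma integrable_inner_L2' {E : Type*} [NormedAddCommGroup E] [InnerProductSpace ℝ E]
    {X Y : Ω → E} (hX : MemLp X 2 (ℙ : Measure Ω)) (hY : MemLp Y 2 (ℙ : Measure Ω)) :
    Integrable (fun ω => ⟪X ω, Y ω⟫) (ℙ : Measure Ω) := by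
  have h := MeasureTheory.L2.integrable_inner (𝕜 := ℝ) (hX.toLp X) (hY.toLp Y)
  refine h.congr ?_
  filter_upwards [hX.coeFn_toLp, hY.coeFn_toLp] with ω h1 h2
  rw [h1, h2]

lemma integrable_norm_sq_L2 {E : Type*} [NormedAddCommGroup E] [InnerProductSpace ℝ E]
    {X : Ω → E} (hX : MemLp X 2 (ℙ : Measure Ω)) :
    Integrable (fun ω => ‖X ω‖ ^ 2) (ℙ : Measure Ω) :=
  (integrable_inner_L2' hX hX).congr (.of_forall fun ω => real_inner_self_eq_norm_sq _)

lemma integral_inner_indep' {n : ℕ} {X Y : Ω → EuclideanSpace ℝ (Fin n)}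
    (hXY : IndepFun X Y ℙ) (hX : Integrable X ℙ) (hY : Integrable Y ℙ) :
    ∫ ω, ⟪X ω, Y ω⟫ = ⟪∫ ω, X ω, ∫ ω, Y ω⟫ := by
  have hXi : ∀ i, Integrable (fun ω => X ω i) ℙ := fun i => by
    simpa using (EuclideanSpace.proj (𝕜 := ℝ) i).integrable_comp hX
  have hYi : ∀ i, Integrable (fun ω => Y ω i) ℙ := fun i => by
    simpa using (EuclideanSpace.proj (𝕜 := ℝ) i).integrable_comp hY
  have hind : ∀ i : Fin n, IndepFun (fun ω => X ω i) (fun ω => Y ω i) ℙ := fun i =>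
    hXY.comp (EuclideanSpace.proj i).continuous.measurable (EuclideanSpace.proj i).continuous.measurable
  have hmul : ∀ i : Fin n, Integrable (fun ω => X ω i * Y ω i) ℙ := fun i =>
    (hind i).integrable_mul (hXi i) (hYi i)
  have hco : ∀ i : Fin n, ∫ ω, X ω i = (∫ ω, X ω) i := fun i => by
    simpa using (EuclideanSpace.proj (𝕜 := ℝ) i).integral_comp_comm hX
  have hco' : ∀ i : Fin n, ∫ ω, Y ω i = (∫ ω, Y ω) i := fun i => by
    simpa using (EuclideanSpace.proj (𝕜 := ℝ) i).integral_comp_comm hY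
  calc ∫ ω, ⟪X ω, Y ω⟫ = ∫ ω, ∑ i, X ω i * Y ω i := by
        refine integral_congr_ae (.of_forall fun ω => ?_)
        simp [PiLp.inner_apply, RCLike.inner_apply, conj_trivial, mul_comm]
    _ = ∑ i, ∫ ω, X ω i * Y ω i := integral_finset_sum _ fun i _ => hmul i
    _ = ∑ i, (∫ ω, X ω) i * (∫ ω, Y ω) i := by
        refine Finset.sum_congr rfl fun i _ => ?_
        rw [← hco i, ← hco' i, ← (hind i).integral_mul_eq_mul_integral (hXi i).1 (hYi i).1]
        rfl
    _ = ⟪∫ ω, X ω, ∫ ω, Y ω⟫ := by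
        simp [PiLp.inner_apply, RCLike.inner_apply, conj_trivial, mul_comm]

end helpers

set_option maxHeartbeats 2000000 in
/-- **Lemma 5 (variance bound for the stochastic hypergradient, key step).**
`a` plays the role of `∇_x F(x,y;D_F)`, `A` of `∇_x∇_y G(x,y;D_G)` and `v` of the
(independent) approximate linear-system solution; `a`, `A`, `v` are mutually
independent (expressed as: `a ⟂ A` and `(a,A) ⟂ v`).  Then for every deterministic
vector `v*`,
`E[‖(a − A v) − (ā − Ā·E[v])‖²] ≤ σ_a² + (2M²/μ²)σ_A² + 2L²·E[‖v − v*‖²]`. -/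
theorem stmt_4 {p q : ℕ} {Ω : Type*} [MeasureSpace Ω] [IsProbabilityMeasure (ℙ : Measure Ω)]
    [MeasurableSpace (EuclideanSpace ℝ (Fin q) →L[ℝ] EuclideanSpace ℝ (Fin p))]
    [BorelSpace (EuclideanSpace ℝ (Fin q) →L[ℝ] EuclideanSpace ℝ (Fin p))]
    (μ L M σa σA : ℝ) (hμ : 0 < μ) (hL : 0 < L) (hM : 0 < M)
    (hσa : 0 < σa) (hσA : 0 < σA)
    (a : Ω → EuclideanSpace ℝ (Fin p)) (ha : MemLp a 2 (ℙ : Measure Ω))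
    (abar : EuclideanSpace ℝ (Fin p)) (habar : abar = ∫ ω, a ω)
    (haVar : ∫ ω, ‖a ω - abar‖ ^ 2 ≤ σa ^ 2)
    (A : Ω → (EuclideanSpace ℝ (Fin q) →L[ℝ] EuclideanSpace ℝ (Fin p)))
    (hA : MemLp A 2 (ℙ : Measure Ω))
    (Abar : EuclideanSpace ℝ (Fin q) →L[ℝ] EuclideanSpace ℝ (Fin p))
    (hAbar : Abar = ∫ ω, A ω)
    (hAbarNorm : ‖Abar‖ ≤ L)
    (hAVar : ∫ ω, ‖A ω - Abar‖ ^ 2 ≤ σA ^ 2)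
    (v : Ω → EuclideanSpace ℝ (Fin q))
    (hvMeas : AEStronglyMeasurable v (ℙ : Measure Ω))
    (hvBound : ∀ᵐ ω, ‖v ω‖ ≤ M / μ)
    (hIndep₁ : IndepFun a A ℙ)
    (hIndep₂ : IndepFun (fun ω => (a ω, A ω)) v ℙ) :
    ∀ vstar : EuclideanSpace ℝ (Fin q),
      ∫ ω, ‖(a ω - A ω (v ω)) - (abar - Abar (∫ ω', v ω'))‖ ^ 2 ≤
        σa ^ 2 + (2 * M ^ 2 / μ ^ 2) * σA ^ 2 + 2 * L ^ 2 * ∫ ω, ‖v ω - vstar‖ ^ 2 := by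
  intro vstar
  set m : EuclideanSpace ℝ (Fin q) := ∫ ω', v ω' with hm
  -- basic integrability facts
  have hv_top : MemLp v ⊤ (ℙ : Measure Ω) := memLp_top_of_bound hvMeas (M / μ) hvBound
  have hv2 : MemLp v 2 (ℙ : Measure Ω) := hv_top.mono_exponent le_top
  have hvI : Integrable v ℙ := hv2.integrable one_le_two
  have haI : Integrable a ℙ := ha.integrable one_le_two
  have hAI : Integrable A ℙ := hA.integrable one_le_two
  set Z : Ω → EuclideanSpace ℝ (Fin p) := fun ω => a ω - abar with hZdef
  set W₁ : Ω → EuclideanSpace ℝ (Fin p) := fun ω => (A ω - Abar) (v ω) with hW₁def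
  set W₂ : Ω → EuclideanSpace ℝ (Fin p) := fun ω => Abar (v ω - m) with hW₂def
  set W : Ω → EuclideanSpace ℝ (Fin p) := fun ω => W₁ ω + W₂ ω with hWdef
  have hZ2 : MemLp Z 2 (ℙ : Measure Ω) := ha.sub (memLp_const abar)
  have hZI : Integrable Z ℙ := hZ2.integrable one_le_two
  have hZmean : ∫ ω, Z ω = 0 := by
    rw [hZdef]
    rw [integral_sub haI (integrable_const abar), integral_const, probReal_univ, one_smul, ← habar, sub_self]
  have hAsub2 : MemLp (fun ω => A ω - Abar) 2 (ℙ : Measure Ω) := hA.sub (memLp_const Abar)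
  have hAsubI : Integrable (fun ω => A ω - Abar) ℙ := hAsub2.integrable one_le_two
  have hvm2 : MemLp (fun ω => v ω - m) 2 (ℙ : Measure Ω) := hv2.sub (memLp_const m)
  have hvmI : Integrable (fun ω => v ω - m) ℙ := hvm2.integrable one_le_two
  have hW₂2 : MemLp W₂ 2 (ℙ : Measure Ω) := Abar.comp_memLp' hvm2
  have hW₂I : Integrable W₂ ℙ := hW₂2.integrable one_le_two
  have hW₁meas : AEStronglyMeasurable W₁ (ℙ : Measure Ω) := by
    exact isBoundedBilinearMap_apply.continuous.comp_aestronglyMeasurable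
      (hAsub2.1.prodMk hvMeas)
  have hW₁2 : MemLp W₁ 2 (ℙ : Measure Ω) := by
    refine MemLp.of_le ((hAsub2.norm).const_mul (M / μ)) hW₁meas ?_
    filter_upwards [hvBound] with ω hω
    have h1 : ‖W₁ ω‖ ≤ ‖A ω - Abar‖ * (M / μ) :=
      le_trans ((A ω - Abar).le_opNorm (v ω))
        (mul_le_mul_of_nonneg_left hω (norm_nonneg _))
    calc ‖W₁ ω‖ ≤ ‖A ω - Abar‖ * (M / μ) := h1
      _ = M / μ * ‖A ω - Abar‖ := by ring
      _ ≤ ‖M / μ * ‖A ω - Abar‖‖ := le_abs_self _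
  have hW₁I : Integrable W₁ ℙ := hW₁2.integrable one_le_two
  have hW2 : MemLp W 2 (ℙ : Measure Ω) := hW₁2.add hW₂2
  have hWI : Integrable W ℙ := hW2.integrable one_le_two
  -- independence of a and v
  have h_av : IndepFun a v ℙ := hIndep₂.comp measurable_fst measurable_id
  -- cross term with W₂ vanishes
  have crossW₂ : ∫ ω, ⟪Z ω, W₂ ω⟫ = 0 := by
    have hind : IndepFun Z W₂ ℙ := by
      have := h_av.comp (φ := fun x => x - abar) (ψ := fun w => Abar (w - m))
        (measurable_id.sub measurable_const)
        ((Abar.continuous.comp (continuous_id.sub continuous_const)).measurable)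
      exact this
    rw [integral_inner_indep' hind hZI hW₂I, hZmean, inner_zero_left]
  -- cross term with W₁ vanishes
  have crossW₁ : ∫ ω, ⟪Z ω, W₁ ω⟫ = 0 := by
    set e : Fin q → EuclideanSpace ℝ (Fin q) := fun j => EuclideanSpace.basisFun (Fin q) ℝ j
      with he
    have hsplit : ∀ ω, ⟪Z ω, W₁ ω⟫ = ∑ j, ⟪Z ω, (A ω - Abar) (e j)⟫ * v ω j := by
      intro ω
      have hv' : (A ω - Abar) (v ω) = ∑ j, v ω j • (A ω - Abar) (e j) := by
        conv_lhs => rw [← (EuclideanSpace.basisFun (Fin q) ℝ).sum_repr (v ω)]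
        rw [map_sum]
        refine Finset.sum_congr rfl fun j _ => ?_
        rw [ContinuousLinearMap.map_smul]
        rfl
      calc ⟪Z ω, W₁ ω⟫ = ⟪Z ω, ∑ j, v ω j • (A ω - Abar) (e j)⟫ := by
            rw [show W₁ ω = (A ω - Abar) (v ω) from rfl, hv']
        _ = ∑ j, ⟪Z ω, (A ω - Abar) (e j)⟫ * v ω j := by
            rw [inner_sum]
            refine Finset.sum_congr rfl fun j _ => ?_
            rw [real_inner_smul_right]; ring
    have hAej2 : ∀ j, MemLp (fun ω => (A ω - Abar) (e j)) 2 (ℙ : Measure Ω) := fun j =>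
      (ContinuousLinearMap.apply ℝ (EuclideanSpace ℝ (Fin p)) (e j)).comp_memLp' hAsub2
    have hAejI : ∀ j, Integrable (fun ω => (A ω - Abar) (e j)) ℙ := fun j =>
      (hAej2 j).integrable one_le_two
    have hinner_int : ∀ j, Integrable (fun ω => ⟪Z ω, (A ω - Abar) (e j)⟫) ℙ := fun j =>
      integrable_inner_L2' hZ2 (hAej2 j)
    have hvj_bd : ∀ j : Fin q, ∀ᵐ ω, ‖v ω j‖ ≤ M / μ := by
      intro j
      filter_upwards [hvBound] with ω hω
      calc ‖v ω j‖ = ‖⟪EuclideanSpace.single j (1:ℝ), v ω⟫‖ := by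
            simp [EuclideanSpace.inner_single_left]
        _ ≤ ‖EuclideanSpace.single j (1:ℝ)‖ * ‖v ω‖ := norm_inner_le_norm _ _
        _ ≤ M / μ := by
            rw [EuclideanSpace.norm_single]
            simpa using hω
    have hterm : ∀ j : Fin q, ∫ ω, ⟪Z ω, (A ω - Abar) (e j)⟫ * v ω j = 0 := by
      intro j
      have hvjI : Integrable (fun ω => v ω j) ℙ := by
        simpa using (EuclideanSpace.proj (𝕜 := ℝ) j).integrable_comp hvI
      have hindep : IndepFun (fun ω => ⟪Z ω, (A ω - Abar) (e j)⟫) (fun ω => v ω j) ℙ := by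
        have hφ : Measurable (fun x : (EuclideanSpace ℝ (Fin p)) ×
            (EuclideanSpace ℝ (Fin q) →L[ℝ] EuclideanSpace ℝ (Fin p)) =>
            ⟪x.1 - abar, (x.2 - Abar) (e j)⟫) := by
          have hc : Continuous (fun x : (EuclideanSpace ℝ (Fin p)) ×
              (EuclideanSpace ℝ (Fin q) →L[ℝ] EuclideanSpace ℝ (Fin p)) =>
              (x.1 - abar, (x.2 - Abar) (e j))) := by
            refine (continuous_fst.sub continuous_const).prodMk ?_
            exact ((ContinuousLinearMap.apply ℝ (EuclideanSpace ℝ (Fin p)) (e j)).continuous).comp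
              (continuous_snd.sub continuous_const)
          exact (continuous_inner.comp hc).measurable
        have hψ : Measurable (fun w : EuclideanSpace ℝ (Fin q) => w j) :=
          (EuclideanSpace.proj (𝕜 := ℝ) j).continuous.measurable
        exact hIndep₂.comp hφ hψ
      have h2 : IndepFun Z (fun ω => (A ω - Abar) (e j)) ℙ := by
        have := hIndep₁.comp (φ := fun x => x - abar) (ψ := fun B => (B - Abar) (e j))
          (measurable_id.sub measurable_const)
          (((ContinuousLinearMap.apply ℝ (EuclideanSpace ℝ (Fin p)) (e j)).continuous).comp
            (continuous_id.sub continuous_const)).measurable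
        exact this
      have hmul := hindep.integral_mul_eq_mul_integral (hinner_int j).1 hvjI.1
      rw [show (fun ω => ⟪Z ω, (A ω - Abar) (e j)⟫ * v ω j) =
        (fun ω => ⟪Z ω, (A ω - Abar) (e j)⟫) * (fun ω => v ω j) from rfl]
      rw [hmul, integral_inner_indep' h2 hZI (hAejI j), hZmean, inner_zero_left, zero_mul]
    have hintg : ∀ j : Fin q, Integrable (fun ω => ⟪Z ω, (A ω - Abar) (e j)⟫ * v ω j) ℙ := by
      intro j
      refine Integrable.mono' (((hinner_int j).norm).const_mul (M / μ)) ?_ ?_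
      · have hvjM : AEStronglyMeasurable (fun ω => v ω j) (ℙ : Measure Ω) :=
          (EuclideanSpace.proj (𝕜 := ℝ) j).continuous.comp_aestronglyMeasurable hvMeas
        exact ((hinner_int j).aestronglyMeasurable.mul hvjM)
      · filter_upwards [hvj_bd j] with ω hω
        calc ‖⟪Z ω, (A ω - Abar) (e j)⟫ * v ω j‖
            = ‖⟪Z ω, (A ω - Abar) (e j)⟫‖ * ‖v ω j‖ := norm_mul _ _
          _ ≤ ‖⟪Z ω, (A ω - Abar) (e j)⟫‖ * (M / μ) :=
              mul_le_mul_of_nonneg_left hω (norm_nonneg _)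
          _ = M / μ * ‖⟪Z ω, (A ω - Abar) (e j)⟫‖ := by ring
    rw [integral_congr_ae (.of_forall hsplit), integral_finset_sum _ fun j _ => hintg j]
    exact Finset.sum_eq_zero fun j _ => hterm j
  -- cross term vanishes
  have hIZW₁ : Integrable (fun ω => ⟪Z ω, W₁ ω⟫) ℙ := integrable_inner_L2' hZ2 hW₁2
  have hIZW₂ : Integrable (fun ω => ⟪Z ω, W₂ ω⟫) ℙ := integrable_inner_L2' hZ2 hW₂2
  have hcross : ∫ ω, ⟪Z ω, W ω⟫ = 0 := by
    have heq : ∀ ω, ⟪Z ω, W ω⟫ = ⟪Z ω, W₁ ω⟫ + ⟪Z ω, W₂ ω⟫ := fun ω => by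
      rw [hWdef]; exact inner_add_right _ _ _
    rw [integral_congr_ae (.of_forall heq), integral_add hIZW₁ hIZW₂, crossW₁, crossW₂, add_zero]
  -- pointwise identity
  have hptwise : ∀ ω, ‖(a ω - A ω (v ω)) - (abar - Abar m)‖ ^ 2 = ‖Z ω - W ω‖ ^ 2 := by
    intro ω
    have : (a ω - A ω (v ω)) - (abar - Abar m) = Z ω - W ω := by
      simp only [hZdef, hWdef, hW₁def, hW₂def, ContinuousLinearMap.sub_apply, map_sub]
      abel
    rw [this]
  -- expansion
  have hIZsq : Integrable (fun ω => ‖Z ω‖ ^ 2) ℙ := integrable_norm_sq_L2 hZ2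
  have hIWsq : Integrable (fun ω => ‖W ω‖ ^ 2) ℙ := integrable_norm_sq_L2 hW2
  have hIZW : Integrable (fun ω => ⟪Z ω, W ω⟫) ℙ := integrable_inner_L2' hZ2 hW2
  have key : ∫ ω, ‖(a ω - A ω (v ω)) - (abar - Abar m)‖ ^ 2
      = (∫ ω, ‖Z ω‖ ^ 2) + ∫ ω, ‖W ω‖ ^ 2 := by
    have hexp : ∀ ω, ‖(a ω - A ω (v ω)) - (abar - Abar m)‖ ^ 2
        = ‖Z ω‖ ^ 2 - 2 * ⟪Z ω, W ω⟫ + ‖W ω‖ ^ 2 := fun ω =>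
      (hptwise ω).trans (norm_sub_sq_real _ _)
    have hint2 : Integrable (fun ω => 2 * ⟪Z ω, W ω⟫) ℙ := hIZW.const_mul 2
    have hint1 : Integrable (fun ω => ‖Z ω‖ ^ 2 - 2 * ⟪Z ω, W ω⟫) ℙ := by
      exact hIZsq.sub hint2
    rw [integral_congr_ae (.of_forall hexp), integral_add hint1 hIWsq,
      integral_sub hIZsq hint2, integral_const_mul, hcross, mul_zero, sub_zero]
  -- bound on W₁
  have hIAsq : Integrable (fun ω => ‖A ω - Abar‖ ^ 2) ℙ := by
    simpa using integrable_norm_sq_L2 (E := ℝ) hAsub2.norm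
  have hW₁sq : ∫ ω, ‖W₁ ω‖ ^ 2 ≤ M ^ 2 / μ ^ 2 * σA ^ 2 := by
    have hb : ∀ᵐ ω, ‖W₁ ω‖ ^ 2 ≤ (M / μ) ^ 2 * ‖A ω - Abar‖ ^ 2 := by
      filter_upwards [hvBound] with ω hω
      have h1 : ‖W₁ ω‖ ≤ ‖A ω - Abar‖ * (M / μ) :=
        le_trans ((A ω - Abar).le_opNorm (v ω))
          (mul_le_mul_of_nonneg_left hω (norm_nonneg _))
      have h2 : (0:ℝ) ≤ ‖A ω - Abar‖ * (M / μ) :=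
        le_trans (norm_nonneg _) h1
      nlinarith [norm_nonneg (W₁ ω)]
    calc ∫ ω, ‖W₁ ω‖ ^ 2 ≤ ∫ ω, (M / μ) ^ 2 * ‖A ω - Abar‖ ^ 2 :=
        integral_mono_ae (integrable_norm_sq_L2 hW₁2) (hIAsq.const_mul _) hb
      _ = (M / μ) ^ 2 * ∫ ω, ‖A ω - Abar‖ ^ 2 := integral_const_mul _ _
      _ ≤ (M / μ) ^ 2 * σA ^ 2 := by
          apply mul_le_mul_of_nonneg_left hAVar (sq_nonneg _)
      _ = M ^ 2 / μ ^ 2 * σA ^ 2 := by rw [div_pow]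
  -- bound on W₂
  have hIvmsq : Integrable (fun ω => ‖v ω - m‖ ^ 2) ℙ := integrable_norm_sq_L2 hvm2
  have hW₂sq : ∫ ω, ‖W₂ ω‖ ^ 2 ≤ L ^ 2 * ∫ ω, ‖v ω - m‖ ^ 2 := by
    have hb : ∀ ω, ‖W₂ ω‖ ^ 2 ≤ L ^ 2 * ‖v ω - m‖ ^ 2 := by
      intro ω
      have h1 : ‖W₂ ω‖ ≤ L * ‖v ω - m‖ :=
        le_trans (Abar.le_opNorm _) (mul_le_mul_of_nonneg_right hAbarNorm (norm_nonneg _))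
      nlinarith [norm_nonneg (W₂ ω), norm_nonneg (v ω - m), mul_nonneg hL.le (norm_nonneg (v ω - m))]
    calc ∫ ω, ‖W₂ ω‖ ^ 2 ≤ ∫ ω, L ^ 2 * ‖v ω - m‖ ^ 2 :=
        integral_mono (integrable_norm_sq_L2 hW₂2) (hIvmsq.const_mul _) hb
      _ = L ^ 2 * ∫ ω, ‖v ω - m‖ ^ 2 := integral_const_mul _ _
  -- bound on W
  have hWsq : ∫ ω, ‖W ω‖ ^ 2 ≤ 2 * (∫ ω, ‖W₁ ω‖ ^ 2) + 2 * ∫ ω, ‖W₂ ω‖ ^ 2 := by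
    have hb : ∀ ω, ‖W ω‖ ^ 2 ≤ 2 * ‖W₁ ω‖ ^ 2 + 2 * ‖W₂ ω‖ ^ 2 := by
      intro ω
      have := norm_add_le (W₁ ω) (W₂ ω)
      have hWd : W ω = W₁ ω + W₂ ω := rfl
      rw [hWd]
      nlinarith [norm_nonneg (W₁ ω), norm_nonneg (W₂ ω), norm_nonneg (W₁ ω + W₂ ω),
        sq_nonneg (‖W₁ ω‖ - ‖W₂ ω‖), sq_nonneg (‖W₁ ω‖ + ‖W₂ ω‖)]
    calc ∫ ω, ‖W ω‖ ^ 2 ≤ ∫ ω, (2 * ‖W₁ ω‖ ^ 2 + 2 * ‖W₂ ω‖ ^ 2) :=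
        integral_mono hIWsq
          (((integrable_norm_sq_L2 hW₁2).const_mul 2).add
            ((integrable_norm_sq_L2 hW₂2).const_mul 2)) hb
      _ = 2 * (∫ ω, ‖W₁ ω‖ ^ 2) + 2 * ∫ ω, ‖W₂ ω‖ ^ 2 := by
          have h1 : Integrable (fun ω => 2 * ‖W₁ ω‖ ^ 2) ℙ := (integrable_norm_sq_L2 hW₁2).const_mul 2
          have h2 : Integrable (fun ω => 2 * ‖W₂ ω‖ ^ 2) ℙ := (integrable_norm_sq_L2 hW₂2).const_mul 2
          rw [integral_add h1 h2, integral_const_mul, integral_const_mul]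
  -- variance minimality for v
  have hvar_min : ∫ ω, ‖v ω - m‖ ^ 2 ≤ ∫ ω, ‖v ω - vstar‖ ^ 2 := by
    have hexp : ∀ ω, ‖v ω - vstar‖ ^ 2
        = ‖v ω - m‖ ^ 2 + 2 * ⟪v ω - m, m - vstar⟫ + ‖m - vstar‖ ^ 2 := by
      intro ω
      rw [show v ω - vstar = (v ω - m) + (m - vstar) by abel, norm_add_sq_real]
    have hinner_int : Integrable (fun ω => ⟪v ω - m, m - vstar⟫) ℙ :=
      hvmI.inner_const (m - vstar)
    have hinner0 : ∫ ω, ⟪v ω - m, m - vstar⟫ = 0 := by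
      have hcomm : ∀ ω, ⟪v ω - m, m - vstar⟫ = ⟪m - vstar, v ω - m⟫ := fun ω =>
        real_inner_comm _ _
      rw [integral_congr_ae (.of_forall hcomm), integral_inner hvmI (m - vstar)]
      have hvm0 : ∫ ω, (v ω - m) = 0 := by
        rw [integral_sub hvI (integrable_const m), integral_const, probReal_univ, one_smul, ← hm, sub_self]
      rw [hvm0, inner_zero_right]
    have heq : ∫ ω, ‖v ω - vstar‖ ^ 2 = (∫ ω, ‖v ω - m‖ ^ 2) + ‖m - vstar‖ ^ 2 := by
      have hint2 : Integrable (fun ω => 2 * ⟪v ω - m, m - vstar⟫) ℙ := hinner_int.const_mul 2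
      have hint1 : Integrable (fun ω => ‖v ω - m‖ ^ 2 + 2 * ⟪v ω - m, m - vstar⟫) ℙ := by
        exact hIvmsq.add hint2
      rw [integral_congr_ae (.of_forall hexp),
        integral_add hint1 (integrable_const _),
        integral_add hIvmsq hint2, integral_const_mul, hinner0, mul_zero,
        add_zero, integral_const, probReal_univ, one_smul]
    linarith [sq_nonneg ‖m - vstar‖]
  -- final assembly
  have hfin : 2 * L ^ 2 * ∫ ω, ‖v ω - m‖ ^ 2 ≤ 2 * L ^ 2 * ∫ ω, ‖v ω - vstar‖ ^ 2 := by
    apply mul_le_mul_of_nonneg_left hvar_min (by positivity)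
  have hZvar : ∫ ω, ‖Z ω‖ ^ 2 ≤ σa ^ 2 := haVar
  have hW₂sq' : 2 * ∫ ω, ‖W₂ ω‖ ^ 2 ≤ 2 * L ^ 2 * ∫ ω, ‖v ω - m‖ ^ 2 := by linarith
  have hW₁sq' : 2 * ∫ ω, ‖W₁ ω‖ ^ 2 ≤ 2 * M ^ 2 / μ ^ 2 * σA ^ 2 := by
    have hrw : 2 * M ^ 2 / μ ^ 2 * σA ^ 2 = 2 * (M ^ 2 / μ ^ 2 * σA ^ 2) := by ring
    rw [hrw]; linarith
  calc ∫ ω, ‖(a ω - A ω (v ω)) - (abar - Abar m)‖ ^ 2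
      = (∫ ω, ‖Z ω‖ ^ 2) + ∫ ω, ‖W ω‖ ^ 2 := key
    _ ≤ σa ^ 2 + (2 * M ^ 2 / μ ^ 2) * σA ^ 2 + 2 * L ^ 2 * ∫ ω, ‖v ω - vstar‖ ^ 2 := by
        linarith
end

section
/- E[‖(y − β G) − y*‖²] ≤ (1 − 2βμL/(μ+L))·‖y − y*‖² + β²σ². -/
open MeasureTheory ProbabilityTheory

section Aux
open Set RealInnerProductSpace

variable {E : Type*} [NormedAddCommGroup E] [InnerProductSpace ℝ E] [CompleteSpace E]

lemma lineDeriv_aux (f : E → ℝ) (f' : E → E) (hf : ∀ p, HasGradientAt f (f' p) p)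
    (x v : E) (t : ℝ) :
    HasDerivAt (fun s : ℝ => f (x + s • v)) ⟪f' (x + t • v), v⟫ t := by
  have hc : HasDerivAt (fun s : ℝ => x + s • v) v t := by
    simpa using ((hasDerivAt_id t).smul_const v).const_add x
  have hF := (hf (x + t • v)).hasFDerivAt
  have := hF.comp_hasDerivAt t hc
  simpa [InnerProductSpace.toDual_apply_apply, Function.comp_def] using this

lemma convex_grad_ineq (f : E → ℝ) (f' : E → E) (hf : ∀ p, HasGradientAt f (f' p) p)
    (hconv : ConvexOn ℝ univ f) (x z : E) :
    f x + ⟪f' x, z - x⟫ ≤ f z := by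
  set φ : ℝ → ℝ := fun s => f (x + s • (z - x)) with hφ
  have hφconv : ConvexOn ℝ univ φ := by
    have := hconv.comp_affineMap (AffineMap.lineMap x z : ℝ →ᵃ[ℝ] E)
    have he : φ = f ∘ (AffineMap.lineMap x z : ℝ →ᵃ[ℝ] E) := by
      funext s
      simp [φ, Function.comp, AffineMap.lineMap_apply, vsub_eq_sub, vadd_eq_add, add_comm]
    rw [he]
    simpa using this
  have hd : HasDerivAt φ ⟪f' x, z - x⟫ 0 := by
    simpa using lineDeriv_aux f f' hf x (z - x) 0
  have := hφconv.le_slope_of_hasDerivAt (mem_univ (0:ℝ)) (mem_univ 1) one_pos hd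
  have hs : slope φ 0 1 = f z - f x := by
    simp [slope_def_field, φ]
  rw [hs] at this
  linarith

lemma descent_lemma (f : E → ℝ) (f' : E → E) (hf : ∀ p, HasGradientAt f (f' p) p)
    (L : ℝ) (hL : 0 ≤ L) (hLip : ∀ a b, ‖f' a - f' b‖ ≤ L * ‖a - b‖) (x z : E) :
    f z ≤ f x + ⟪f' x, z - x⟫ + L / 2 * ‖z - x‖ ^ 2 := by
  set v : E := z - x with hv
  set c1 : ℝ := ⟪f' x, v⟫ with hc1
  set c2 : ℝ := L / 2 * ‖v‖ ^ 2 with hc2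
  set ψ : ℝ → ℝ := fun t => f (x + t • v) - t * c1 - t ^ 2 * c2 with hψ
  have hder : ∀ t : ℝ, HasDerivAt ψ (⟪f' (x + t • v), v⟫ - c1 - 2 * t * c2) t := by
    intro t
    have h1 := lineDeriv_aux f f' hf x v t
    have h2 : HasDerivAt (fun t : ℝ => t * c1) c1 t := by
      simpa using (hasDerivAt_id t).mul_const c1
    have h3 : HasDerivAt (fun t : ℝ => t ^ 2 * c2) (2 * t * c2) t := by
      simpa [mul_comm] using (hasDerivAt_pow 2 t).mul_const c2
    exact (h1.sub h2).sub h3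
  have hanti : AntitoneOn ψ (Icc (0:ℝ) 1) := by
    apply antitoneOn_of_deriv_nonpos (convex_Icc 0 1)
    · exact fun t _ => ((hder t).differentiableAt).continuousAt.continuousWithinAt
    · intro t ht
      exact ((hder t).differentiableAt).differentiableWithinAt
    · intro t ht
      rw [interior_Icc] at ht
      rw [(hder t).deriv]
      have hip : ⟪f' (x + t • v), v⟫ - c1 = ⟪f' (x + t • v) - f' x, v⟫ := by
        rw [inner_sub_left]
      have hb : ⟪f' (x + t • v) - f' x, v⟫ ≤ ‖f' (x + t • v) - f' x‖ * ‖v‖ :=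
        real_inner_le_norm _ _
      have hl : ‖f' (x + t • v) - f' x‖ ≤ L * ‖(x + t • v) - x‖ := hLip _ _
      have hn : ‖(x + t • v) - x‖ = t * ‖v‖ := by
        simp [norm_smul, abs_of_pos ht.1]
      rw [hn] at hl
      have : ⟪f' (x + t • v), v⟫ - c1 ≤ L * (t * ‖v‖) * ‖v‖ := by
        rw [hip]
        calc ⟪f' (x + t • v) - f' x, v⟫ ≤ ‖f' (x + t • v) - f' x‖ * ‖v‖ := hb
        _ ≤ L * (t * ‖v‖) * ‖v‖ := by
            apply mul_le_mul_of_nonneg_right hl (norm_nonneg _)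
      have h2c2 : 2 * t * c2 = L * (t * ‖v‖) * ‖v‖ := by rw [hc2]; ring
      linarith
  have h01 := hanti (left_mem_Icc.2 zero_le_one) (right_mem_Icc.2 zero_le_one) zero_le_one
  have hψ0 : ψ 0 = f x := by simp [ψ]
  have hψ1 : ψ 1 = f z - c1 - c2 := by simp [ψ, hv]
  rw [hψ0, hψ1] at h01
  linarith

lemma gradsq (c : ℝ) (p : E) :
    HasGradientAt (fun w : E => c / 2 * ‖w‖ ^ 2) (c • p) p := by
  rw [hasGradientAt_iff_isLittleO]
  have he : (fun x' : E => c / 2 * ‖x'‖ ^ 2 - c / 2 * ‖p‖ ^ 2 - ⟪c • p, x' - p⟫)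
      = fun x' : E => c / 2 * ‖x' - p‖ ^ 2 := by
    funext x'
    have h1 : ‖x' - p‖ ^ 2 = ‖x'‖ ^ 2 - 2 * ⟪x', p⟫ + ‖p‖ ^ 2 := norm_sub_sq_real x' p
    have h2 : ⟪c • p, x' - p⟫ = c * (⟪p, x'⟫ - ⟪p, p⟫) := by
      rw [inner_sub_right, real_inner_smul_left, real_inner_smul_left]; ring
    have h3 : ⟪p, p⟫ = ‖p‖ ^ 2 := real_inner_self_eq_norm_sq p
    have h4 : ⟪p, x'⟫ = ⟪x', p⟫ := real_inner_comm _ _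
    rw [h1, h2, h3, h4]; ring
  rw [he]
  rw [Asymptotics.isLittleO_iff]
  intro ε hε
  have htend : Filter.Tendsto (fun x' : E => ‖x' - p‖) (nhds p) (nhds 0) := by
    have : Filter.Tendsto (fun x' : E => x' - p) (nhds p) (nhds (p - p)) :=
      (continuous_id.sub continuous_const).tendsto p
    simpa using this.norm
  have hev : ∀ᶠ x' in nhds p, ‖x' - p‖ < ε / (|c| / 2 + 1) := by
    apply htend.eventually_lt_const
    positivity
  filter_upwards [hev] with x' hx'
  have h0 : (0:ℝ) ≤ ‖x' - p‖ := norm_nonneg _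
  have : ‖c / 2 * ‖x' - p‖ ^ 2‖ = |c| / 2 * (‖x' - p‖ * ‖x' - p‖) := by
    rw [norm_mul, Real.norm_eq_abs, Real.norm_eq_abs, abs_div]
    rw [abs_of_nonneg (by positivity : (0:ℝ) ≤ ‖x' - p‖ ^ 2)]
    norm_num [pow_two]
  rw [this]
  have hcd : |c| / 2 * ‖x' - p‖ ≤ ε := by
    have h1 : |c| / 2 * ‖x' - p‖ ≤ |c| / 2 * (ε / (|c| / 2 + 1)) := by
      apply mul_le_mul_of_nonneg_left hx'.le (by positivity)
    have h2 : |c| / 2 * (ε / (|c| / 2 + 1)) ≤ ε := by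
      rw [mul_div_assoc'] at *
      rw [div_le_iff₀ (by positivity : (0:ℝ) < |c| / 2 + 1)]
      nlinarith [abs_nonneg c, hε.le]
    linarith
  calc |c| / 2 * (‖x' - p‖ * ‖x' - p‖) = (|c| / 2 * ‖x' - p‖) * ‖x' - p‖ := by ring
  _ ≤ ε * ‖x' - p‖ := mul_le_mul_of_nonneg_right hcd h0
  _ = ε * ‖x' - p‖ := rfl

lemma lower_bound (f : E → ℝ) (f' : E → E) (K : ℝ) (hK : 0 < K)
    (hconv : ∀ a b : E, f a + ⟪f' a, b - a⟫ ≤ f b)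
    (hdesc : ∀ a b : E, f b ≤ f a + ⟪f' a, b - a⟫ + K / 2 * ‖b - a‖ ^ 2)
    (x z : E) :
    f x + ⟪f' x, z - x⟫ + 1 / (2 * K) * ‖f' z - f' x‖ ^ 2 ≤ f z := by
  set Δ : E := f' z - f' x with hΔ
  set w : E := z - K⁻¹ • Δ with hw
  have h1 := hconv x w
  have h2 := hdesc z w
  have hwz : w - z = -(K⁻¹ • Δ) := by rw [hw]; abel
  have e1 : ⟪f' z, w - z⟫ = -(K⁻¹ * ⟪f' z, Δ⟫) := by
    rw [hwz, inner_neg_right, real_inner_smul_right]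
  have e2 : ‖w - z‖ ^ 2 = K⁻¹ ^ 2 * ‖Δ‖ ^ 2 := by
    rw [hwz, norm_neg, norm_smul, Real.norm_eq_abs, abs_of_pos (inv_pos.2 hK), mul_pow]
  have e3 : ⟪f' x, w - x⟫ = ⟪f' x, z - x⟫ - K⁻¹ * ⟪f' x, Δ⟫ := by
    have : w - x = (z - x) - K⁻¹ • Δ := by rw [hw]; abel
    rw [this, inner_sub_right, real_inner_smul_right]
  have e4 : ⟪f' z, Δ⟫ - ⟪f' x, Δ⟫ = ‖Δ‖ ^ 2 := by
    rw [← inner_sub_left, ← hΔ, real_inner_self_eq_norm_sq]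
  rw [e3] at h1
  rw [e1, e2] at h2
  have hKne : K ≠ 0 := hK.ne'
  have key : K / 2 * (K⁻¹ ^ 2 * ‖Δ‖ ^ 2) = 1 / (2 * K) * ‖Δ‖ ^ 2 := by
    field_simp
  have e5 : K⁻¹ * ⟪f' z, Δ⟫ - K⁻¹ * ⟪f' x, Δ⟫ = K⁻¹ * ‖Δ‖ ^ 2 := by
    rw [← mul_sub, e4]
  have e6 : K⁻¹ * ‖Δ‖ ^ 2 = 2 * (1 / (2 * K) * ‖Δ‖ ^ 2) := by
    field_simp
  linarith [h1, h2]

lemma cocoercive (f : E → ℝ) (f' : E → E) (K : ℝ) (hK : 0 < K)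
    (hconv : ∀ a b : E, f a + ⟪f' a, b - a⟫ ≤ f b)
    (hdesc : ∀ a b : E, f b ≤ f a + ⟪f' a, b - a⟫ + K / 2 * ‖b - a‖ ^ 2)
    (x z : E) :
    K⁻¹ * ‖f' z - f' x‖ ^ 2 ≤ ⟪f' z - f' x, z - x⟫ := by
  have h1 := lower_bound f f' K hK hconv hdesc x z
  have h2 := lower_bound f f' K hK hconv hdesc z x
  have e1 : ‖f' x - f' z‖ = ‖f' z - f' x‖ := norm_sub_rev _ _
  rw [e1] at h2
  have e2 : ⟪f' z, x - z⟫ = -⟪f' z, z - x⟫ := by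
    rw [← inner_neg_right]; congr 1; abel
  rw [e2] at h2
  have e3 : ⟪f' z - f' x, z - x⟫ = ⟪f' z, z - x⟫ - ⟪f' x, z - x⟫ := inner_sub_left _ _ _
  have hKne : K ≠ 0 := hK.ne'
  have e6 : K⁻¹ * ‖f' z - f' x‖ ^ 2 = 2 * (1 / (2 * K) * ‖f' z - f' x‖ ^ 2) := by
    field_simp
  rw [e3]
  linarith [h1, h2]

lemma key_ineq (μ L : ℝ) (hμ : 0 < μ) (hμL : μ ≤ L) (g : E → ℝ) (g' : E → E)
    (hg : ∀ p, HasGradientAt g (g' p) p) (hsc : StrongConvexOn univ μ g)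
    (hLip : ∀ a b : E, ‖g' a - g' b‖ ≤ L * ‖a - b‖) (x z : E) :
    μ * L * ‖z - x‖ ^ 2 + ‖g' z - g' x‖ ^ 2 ≤ (μ + L) * ⟪g' z - g' x, z - x⟫ := by
  set h : E → ℝ := fun w => g w - μ / 2 * ‖w‖ ^ 2 with hh
  set h' : E → E := fun w => g' w - μ • w with hh'
  have hgradh : ∀ p : E, HasGradientAt h (h' p) p := by
    intro p
    rw [hasGradientAt_iff_hasFDerivAt, map_sub]
    exact ((hg p).hasFDerivAt).sub (gradsq μ p).hasFDerivAt
  have hhconv : ConvexOn ℝ univ h := strongConvexOn_iff_convex.mp hsc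
  have hconv_h : ∀ a b : E, h a + ⟪h' a, b - a⟫ ≤ h b :=
    fun a b => convex_grad_ineq h h' hgradh hhconv a b
  -- quadratic expansion identity
  have hquad : ∀ a b : E, ‖b‖ ^ 2 = ‖a‖ ^ 2 + 2 * ⟪a, b - a⟫ + ‖b - a‖ ^ 2 := by
    intro a b
    have := norm_add_sq_real a (b - a)
    simpa using this
  have hdesc_g : ∀ a b : E, g b ≤ g a + ⟪g' a, b - a⟫ + L / 2 * ‖b - a‖ ^ 2 :=
    descent_lemma g g' hg L (hμ.trans_le hμL).le hLip
  have hdesc_h : ∀ a b : E, h b ≤ h a + ⟪h' a, b - a⟫ + (L - μ) / 2 * ‖b - a‖ ^ 2 := by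
    intro a b
    have h1 := hdesc_g a b
    have h2 := hquad a b
    have e1 : ⟪h' a, b - a⟫ = ⟪g' a, b - a⟫ - μ * ⟪a, b - a⟫ := by
      rw [hh']
      simp only [inner_sub_left, real_inner_smul_left]
    simp only [hh]
    rw [e1]
    nlinarith [h1, h2]
  -- monotonicity of grad h
  have hmono : ∀ a b : E, 0 ≤ ⟪h' b - h' a, b - a⟫ := by
    intro a b
    have h1 := hconv_h a b
    have h2 := hconv_h b a
    have e2 : ⟪h' b, a - b⟫ = -⟪h' b, b - a⟫ := by
      rw [← inner_neg_right]; congr 1; abel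
    rw [e2] at h2
    rw [inner_sub_left]
    linarith
  set Δ : E := g' z - g' x with hΔ
  set d : E := z - x with hd
  have eΔh : h' z - h' x = Δ - μ • d := by
    rw [hh']
    simp only [hΔ, hd, smul_sub]
    abel
  have eexp : ⟪Δ - μ • d, d⟫ = ⟪Δ, d⟫ - μ * ⟪d, d⟫ := by
    rw [inner_sub_left, real_inner_smul_left]
  have ednorm : ⟪d, d⟫ = ‖d‖ ^ 2 := real_inner_self_eq_norm_sq d
  rcases eq_or_lt_of_le hμL with heq | hlt
  · -- μ = L
    subst heq
    have hm := hmono x z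
    rw [eΔh, eexp, ednorm] at hm
    have hlip' : ‖Δ‖ ≤ μ * ‖d‖ := hLip z x
    have h2 : ‖Δ‖ ^ 2 ≤ μ ^ 2 * ‖d‖ ^ 2 := by
      have := mul_le_mul hlip' hlip' (norm_nonneg _) (by positivity)
      nlinarith [this]
    nlinarith [hm, h2]
  · have hK : (0:ℝ) < L - μ := sub_pos.2 hlt
    have hco := cocoercive h h' (L - μ) hK hconv_h hdesc_h x z
    rw [eΔh] at hco
    have enorm : ‖Δ - μ • d‖ ^ 2 = ‖Δ‖ ^ 2 - 2 * (μ * ⟪Δ, d⟫) + μ ^ 2 * ‖d‖ ^ 2 := by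
      rw [norm_sub_sq_real, real_inner_smul_right, norm_smul, Real.norm_eq_abs,
        abs_of_pos hμ, mul_pow]
    rw [eexp, ednorm, enorm] at hco
    have hKinv : (L - μ)⁻¹ * ((L - μ) * (⟪Δ, d⟫ - μ * ‖d‖ ^ 2)) = ⟪Δ, d⟫ - μ * ‖d‖ ^ 2 := by
      field_simp
    have hmul : ‖Δ‖ ^ 2 - 2 * (μ * ⟪Δ, d⟫) + μ ^ 2 * ‖d‖ ^ 2 ≤ (L - μ) * (⟪Δ, d⟫ - μ * ‖d‖ ^ 2) := by
      have := mul_le_mul_of_nonneg_left hco hK.le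
      rw [← mul_assoc, mul_inv_cancel₀ hK.ne', one_mul] at this
      linarith [this]
    nlinarith [hmul]

end Aux

open Set RealInnerProductSpace

/-- **One stochastic gradient step on a strongly convex function (single-step bound).**
`g` is `μ`-strongly convex with `L`-Lipschitz gradient, `y*` its minimizer,
`G` an unbiased stochastic gradient at `y` with variance at most `σ²`, and
`0 < β ≤ 2/(μ+L)`; then
`E[‖(y − β G) − y*‖²] ≤ (1 − 2βμL/(μ+L))‖y − y*‖² + β²σ²`. -/
theorem stmt_5 {q : ℕ} {Ω : Type*} [MeasureSpace Ω] [IsProbabilityMeasure (ℙ : Measure Ω)]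
    (μ L β σ : ℝ) (hμ : 0 < μ) (hμL : μ ≤ L) (hβ : 0 < β) (hβ2 : β ≤ 2 / (μ + L))
    (hσ : 0 < σ)
    (g : EuclideanSpace ℝ (Fin q) → ℝ)
    (gradg : EuclideanSpace ℝ (Fin q) → EuclideanSpace ℝ (Fin q))
    (hgrad : ∀ y, HasGradientAt g (gradg y) y)
    (hStrong : StrongConvexOn Set.univ μ g)
    (hLip : ∀ y₁ y₂, ‖gradg y₁ - gradg y₂‖ ≤ L * ‖y₁ - y₂‖)
    (ystar : EuclideanSpace ℝ (Fin q)) (hmin : ∀ y, g ystar ≤ g y)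
    (y : EuclideanSpace ℝ (Fin q))
    (G : Ω → EuclideanSpace ℝ (Fin q)) (hG : MemLp G 2 (ℙ : Measure Ω))
    (hGmean : (∫ ω, G ω) = gradg y)
    (hGVar : ∫ ω, ‖G ω - gradg y‖ ^ 2 ≤ σ ^ 2) :
    ∫ ω, ‖(y - β • G ω) - ystar‖ ^ 2 ≤
      (1 - 2 * β * μ * L / (μ + L)) * ‖y - ystar‖ ^ 2 + β ^ 2 * σ ^ 2 := by
  have hμL2 : (0:ℝ) < μ + L := by linarith
  -- gradient at the minimizer vanishes
  have hg0 : gradg ystar = 0 := by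
    have hloc : IsLocalMin g ystar := Filter.Eventually.of_forall hmin
    have h1 := hloc.hasFDerivAt_eq_zero (hgrad ystar).hasFDerivAt
    have h2 := congrArg (InnerProductSpace.toDual ℝ (EuclideanSpace ℝ (Fin q))).symm h1
    simpa using h2
  -- the key strong convexity / smoothness inequality
  have hkey := key_ineq μ L hμ hμL g gradg hgrad hStrong hLip ystar y
  rw [hg0, sub_zero] at hkey
  -- deterministic bound on ‖(y - ystar) - β • gradg y‖²
  have hβ2' : β * (μ + L) ≤ 2 := by
    rw [le_div_iff₀ hμL2] at hβ2
    exact hβ2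
  set gy := gradg y with hgy
  set d : EuclideanSpace ℝ (Fin q) := y - ystar with hd
  set cvec : EuclideanSpace ℝ (Fin q) := d - β • gy with hcvec
  have hcnorm : ‖cvec‖ ^ 2 = ‖d‖ ^ 2 - 2 * β * ⟪gy, d⟫ + β ^ 2 * ‖gy‖ ^ 2 := by
    rw [hcvec, norm_sub_sq_real, real_inner_smul_right, norm_smul, Real.norm_eq_abs,
      abs_of_pos hβ, mul_pow, real_inner_comm]
    ring
  have hdet : ‖cvec‖ ^ 2 ≤ (1 - 2 * β * μ * L / (μ + L)) * ‖d‖ ^ 2 := by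
    rw [hcnorm]
    have hmul : (μ + L) * (‖d‖ ^ 2 - 2 * β * ⟪gy, d⟫ + β ^ 2 * ‖gy‖ ^ 2)
        ≤ (μ + L) * ((1 - 2 * β * μ * L / (μ + L)) * ‖d‖ ^ 2) := by
      have hrhs : (μ + L) * ((1 - 2 * β * μ * L / (μ + L)) * ‖d‖ ^ 2)
          = (μ + L) * ‖d‖ ^ 2 - 2 * β * μ * L * ‖d‖ ^ 2 := by
        field_simp
      rw [hrhs]
      have h2β := mul_le_mul_of_nonneg_left hkey (by positivity : (0:ℝ) ≤ 2 * β)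
      have hNn : (0:ℝ) ≤ β * ‖gy‖ ^ 2 := by positivity
      nlinarith [h2β, hNn, hβ2']
    exact le_of_mul_le_mul_left hmul hμL2
  -- integrability facts
  have hGint : Integrable G ℙ := hG.integrable (by norm_num)
  have hG'int : Integrable (fun ω => G ω - gy) ℙ := hGint.sub (integrable_const _)
  have hinner_int : Integrable (fun ω => ⟪cvec, G ω - gy⟫) ℙ := by
    have := ContinuousLinearMap.integrable_comp (innerSL ℝ cvec) hG'int
    simpa using this
  have hsq_int : Integrable (fun ω => ‖G ω - gy‖ ^ 2) ℙ := by
    have h2 := (hG.sub (memLp_const gy)).integrable_norm_rpow (p := 2) two_ne_zero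
      ENNReal.ofNat_ne_top
    have h3 : ∀ ω : Ω, ‖G ω - gy‖ ^ ((2:ENNReal).toReal) = ‖G ω - gy‖ ^ 2 := by
      intro ω
      rw [ENNReal.toReal_ofNat]
      norm_num [Real.rpow_natCast]
    refine h2.congr' ?_ ?_
    · exact h2.aestronglyMeasurable.congr (Filter.Eventually.of_forall fun ω => (h3 ω))
    · exact Filter.Eventually.of_forall fun ω => ((h3 ω) ▸ rfl)
  have hmean0 : (∫ ω, (G ω - gy)) = 0 := by
    rw [integral_sub hGint (integrable_const _), integral_const]
    simp [hGmean, hgy]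
  have hinner0 : (∫ ω, ⟪cvec, G ω - gy⟫) = 0 := by
    rw [integral_inner hG'int, hmean0, inner_zero_right]
  -- pointwise expansion
  have hexp : ∀ ω, ‖(y - β • G ω) - ystar‖ ^ 2
      = ‖cvec‖ ^ 2 - 2 * β * ⟪cvec, G ω - gy⟫ + β ^ 2 * ‖G ω - gy‖ ^ 2 := by
    intro ω
    have hpt : (y - β • G ω) - ystar = cvec - β • (G ω - gy) := by
      rw [hcvec, hd]
      simp only [smul_sub]
      abel
    rw [hpt, norm_sub_sq_real, real_inner_smul_right, norm_smul, Real.norm_eq_abs,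
      abs_of_pos hβ, mul_pow]
    ring
  have hsplit : ∫ ω, ‖(y - β • G ω) - ystar‖ ^ 2
      = ‖cvec‖ ^ 2 + β ^ 2 * ∫ ω, ‖G ω - gy‖ ^ 2 := by
    rw [integral_congr_ae (Filter.Eventually.of_forall hexp)]
    have hi1 : Integrable (fun ω => ‖cvec‖ ^ 2 - 2 * β * ⟪cvec, G ω - gy⟫) ℙ := by
      exact (integrable_const _).sub (hinner_int.const_mul _)
    have hi2 : Integrable (fun ω => β ^ 2 * ‖G ω - gy‖ ^ 2) ℙ := hsq_int.const_mul _
    rw [integral_add hi1 hi2,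
      integral_sub (integrable_const _) (hinner_int.const_mul _),
      integral_const, integral_const_mul, integral_const_mul, hinner0]
    simp
  rw [hsplit]
  have hvar' : β ^ 2 * ∫ ω, ‖G ω - gy‖ ^ 2 ≤ β ^ 2 * σ ^ 2 :=
    mul_le_mul_of_nonneg_left hGVar (sq_nonneg β)
  have : (1 - 2 * β * μ * L / (μ + L)) * ‖y - ystar‖ ^ 2
      = (1 - 2 * β * μ * L / (μ + L)) * ‖d‖ ^ 2 := by rw [hd]
  rw [this]
  linarith [hdet, hvar']
end

section
/- E[‖((I − η H) v + η b) − v̂‖²] ≤ (1 − ημ)·E[‖v − v̂‖²] + η²(M²/μ²)·σ_H² + η²·σ_b². -/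
open MeasureTheory ProbabilityTheory
open scoped RealInnerProductSpace

section Helpers

lemma my_integrable_inner {α : Type*} {m : MeasurableSpace α} {μ' : Measure α}
    {E : Type*} [NormedAddCommGroup E] [InnerProductSpace ℝ E]
    {f g : α → E} (hf : MemLp f 2 μ') (hg : MemLp g 2 μ') :
    Integrable (fun x => ⟪f x, g x⟫) μ' := by
  have h := L2.integrable_inner (𝕜 := ℝ) (hf.toLp f) (hg.toLp g)
  refine h.congr ?_
  filter_upwards [hf.coeFn_toLp, hg.coeFn_toLp] with x h1 h2
  rw [h1, h2]

lemma my_integrable_mul {α : Type*} {m : MeasurableSpace α} {μ' : Measure α}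
    {f g : α → ℝ} (hf : MemLp f 2 μ') (hg : MemLp g 2 μ') :
    Integrable (fun x => f x * g x) μ' := by
  have := my_integrable_inner hf hg
  simpa [RCLike.inner_apply, mul_comm] using this

lemma apply_coord {q : ℕ} (T : EuclideanSpace ℝ (Fin q) →L[ℝ] EuclideanSpace ℝ (Fin q))
    (x : EuclideanSpace ℝ (Fin q)) (i : Fin q) :
    T x i = ∑ j, x j * T (EuclideanSpace.single j 1) i := by
  have hx : x = ∑ j, x j • EuclideanSpace.single j (1:ℝ) := by
    have := (EuclideanSpace.basisFun (Fin q) ℝ).sum_repr x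
    simp only [EuclideanSpace.basisFun_apply, EuclideanSpace.basisFun_repr] at this
    exact this.symm
  have h1 : ∀ (y : EuclideanSpace ℝ (Fin q)) (i : Fin q), y i = ⟪y, EuclideanSpace.single i 1⟫ := by
    intro y i
    simp [EuclideanSpace.inner_single_right]
  rw [h1 (T x) i]
  conv_lhs => rw [hx]
  rw [map_sum, sum_inner]
  refine Finset.sum_congr rfl fun j _ => ?_
  rw [_root_.map_smul, real_inner_smul_left, ← h1]

lemma coord_abs_le_norm {q : ℕ} (y : EuclideanSpace ℝ (Fin q)) (i : Fin q) : |y i| ≤ ‖y‖ := by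
  have h := abs_real_inner_le_norm y (EuclideanSpace.single i (1:ℝ))
  simpa [EuclideanSpace.inner_single_right, EuclideanSpace.norm_single] using h

lemma symm_op_sq_bound {F : Type*} [NormedAddCommGroup F] [InnerProductSpace ℝ F]
    (T : F →L[ℝ] F) (c : ℝ)
    (hsymm : ∀ x y, ⟪T x, y⟫ = ⟪x, T y⟫)
    (hpos : ∀ x, 0 ≤ ⟪T x, x⟫) (hub : ∀ x, ⟪T x, x⟫ ≤ c * ‖x‖ ^ 2)
    (hc1 : c ≤ 1) (w : F) : ‖T w‖ ^ 2 ≤ c * ‖w‖ ^ 2 := by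
  have key : ∀ x y : F, ⟪T x, y⟫ ^ 2 ≤ ⟪T x, x⟫ * ⟪T y, y⟫ := by
    intro x y
    have hq : ∀ t : ℝ, 0 ≤ ⟪T y, y⟫ * (t * t) + (2 * ⟪T x, y⟫) * t + ⟪T x, x⟫ := by
      intro t
      have h0 := hpos (x + t • y)
      have hyx : ⟪T y, x⟫ = ⟪T x, y⟫ := by
        rw [hsymm y x, real_inner_comm]
      have hexp : ⟪T (x + t • y), x + t • y⟫
          = ⟪T y, y⟫ * (t * t) + (2 * ⟪T x, y⟫) * t + ⟪T x, x⟫ := by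
        simp only [map_add, ContinuousLinearMap.map_smul, inner_add_left, inner_add_right,
          real_inner_smul_left, real_inner_smul_right, hyx]
        ring
      linarith [hexp ▸ h0]
    have hd := discrim_le_zero hq
    rw [discrim] at hd
    nlinarith [hd]
  by_cases h0 : T w = 0
  · have := hpos w
    have := hub w
    simp only [h0, norm_zero]
    nlinarith
  · have hs : 0 < ‖T w‖ ^ 2 := pow_pos (norm_pos_iff.mpr h0) 2
    have k := key w (T w)
    have e1 : ⟪T w, T w⟫ = ‖T w‖ ^ 2 := real_inner_self_eq_norm_sq _
    rw [e1] at k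
    have h1 : ⟪T (T w), T w⟫ ≤ c * ‖T w‖ ^ 2 := hub (T w)
    have h2 : ⟪T w, w⟫ ≤ c * ‖w‖ ^ 2 := hub w
    have h3 : 0 ≤ ⟪T w, w⟫ := hpos w
    have hw : 0 < ‖w‖ ^ 2 := by
      rcases eq_or_ne w 0 with rfl | hw
      · simp at h0
      · exact pow_pos (norm_pos_iff.mpr hw) 2
    have hc0 : 0 ≤ c := by nlinarith
    nlinarith [hpos (T w), mul_le_mul_of_nonneg_left h1 h3,
      mul_le_mul_of_nonneg_left (mul_le_mul_of_nonneg_right h2 hs.le) hc0,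
      mul_le_mul_of_nonneg_right (mul_le_mul_of_nonneg_right hc1 (mul_nonneg hc0 hw.le)) hs.le]

lemma my_cross_zero {Ω : Type*} [MeasureSpace Ω] {β γ : Type*}
    [MeasurableSpace β] [MeasurableSpace γ]
    (F : Ω → β) (G : Ω → γ) (φ : β → ℝ) (ψ : γ → ℝ) (hFG : IndepFun F G ℙ)
    (hφ : Measurable φ) (hψ : Measurable ψ)
    (hφF : Integrable (fun ω => φ (F ω)) ℙ) (hψG : Integrable (fun ω => ψ (G ω)) ℙ)
    (hzero : (∫ ω, ψ (G ω)) = 0) :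
    ∫ ω, φ (F ω) * ψ (G ω) = 0 := by
  have h : ∫ ω, φ (F ω) * ψ (G ω) = (∫ ω, φ (F ω)) * ∫ ω, ψ (G ω) :=
    (hFG.comp hφ hψ).integral_mul_eq_mul_integral hφF.1 hψG.1
  rw [h, hzero, mul_zero]

end Helpers

set_option maxHeartbeats 2000000 in
/-- **One stochastic step of the linear-system solver contracts in mean square.**
`H̄` is self-adjoint with `μ·I ⪯ H̄ ⪯ L·I` and `v̂ = H̄⁻¹ b̄`; `H`, `b`, `v` are
mutually independent (expressed as: `H ⟂ b` and `(H,b) ⟂ v`), `E[H] = H̄`,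
`E[b] = b̄`, `E[‖H − H̄‖²] ≤ σ_H²`, `E[‖b − b̄‖²] ≤ σ_b²`, `‖v‖ ≤ M/μ` a.s.; then
`E[‖((I − η H) v + η b) − v̂‖²] ≤ (1 − ημ)E[‖v − v̂‖²] + η²(M²/μ²)σ_H² + η²σ_b²`. -/
theorem stmt_7 {q : ℕ} {Ω : Type*} [MeasureSpace Ω] [IsProbabilityMeasure (ℙ : Measure Ω)]
    [MeasurableSpace (EuclideanSpace ℝ (Fin q) →L[ℝ] EuclideanSpace ℝ (Fin q))]
    [BorelSpace (EuclideanSpace ℝ (Fin q) →L[ℝ] EuclideanSpace ℝ (Fin q))]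
    (μ L M η σH σb : ℝ) (hμ : 0 < μ) (hμL : μ ≤ L) (hM : 0 < M)
    (hη : 0 < η) (hηL : η ≤ 1 / L) (hσH : 0 < σH) (hσb : 0 < σb)
    (Hbar Hinv : EuclideanSpace ℝ (Fin q) →L[ℝ] EuclideanSpace ℝ (Fin q))
    (hSelfAdj : IsSelfAdjoint Hbar)
    (hLower : ∀ w, μ * ‖w‖ ^ 2 ≤ ⟪Hbar w, w⟫)
    (hUpper : ∀ w, ⟪Hbar w, w⟫ ≤ L * ‖w‖ ^ 2)
    (hInv₁ : Hbar.comp Hinv = 1) (hInv₂ : Hinv.comp Hbar = 1)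
    (bbar : EuclideanSpace ℝ (Fin q))
    (vhat : EuclideanSpace ℝ (Fin q)) (hvhat : vhat = Hinv bbar)
    (H : Ω → (EuclideanSpace ℝ (Fin q) →L[ℝ] EuclideanSpace ℝ (Fin q)))
    (hH : MemLp H 2 (ℙ : Measure Ω))
    (hHmean : (∫ ω, H ω) = Hbar)
    (hHVar : ∫ ω, ‖H ω - Hbar‖ ^ 2 ≤ σH ^ 2)
    (b : Ω → EuclideanSpace ℝ (Fin q))
    (hb : MemLp b 2 (ℙ : Measure Ω))
    (hbmean : (∫ ω, b ω) = bbar)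
    (hbVar : ∫ ω, ‖b ω - bbar‖ ^ 2 ≤ σb ^ 2)
    (v : Ω → EuclideanSpace ℝ (Fin q))
    (hvMeas : AEStronglyMeasurable v (ℙ : Measure Ω))
    (hvBound : ∀ᵐ ω, ‖v ω‖ ≤ M / μ)
    (hIndep₁ : IndepFun H b ℙ)
    (hIndep₂ : IndepFun (fun ω => (H ω, b ω)) v ℙ) :
    ∫ ω, ‖((1 - η • H ω) (v ω) + η • b ω) - vhat‖ ^ 2 ≤
      (1 - η * μ) * (∫ ω, ‖v ω - vhat‖ ^ 2)
        + η ^ 2 * (M ^ 2 / μ ^ 2) * σH ^ 2 + η ^ 2 * σb ^ 2 := by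
  set A : (EuclideanSpace ℝ (Fin q)) →L[ℝ] (EuclideanSpace ℝ (Fin q)) := 1 - η • Hbar with hA
  -- basic positivity
  have hL0 : 0 < L := lt_of_lt_of_le hμ hμL
  have hηL1 : η * L ≤ 1 := (le_div_iff₀ hL0).mp hηL
  have hMμ0 : 0 ≤ M / μ := le_of_lt (div_pos hM hμ)
  -- ℒ² facts
  have hv2 : MemLp v 2 (ℙ : Measure Ω) := MemLp.of_bound hvMeas (M / μ) hvBound
  have he2 : MemLp (fun ω => v ω - vhat) 2 (ℙ : Measure Ω) := hv2.sub (memLp_const vhat)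
  have hAe2 : MemLp (fun ω => A (v ω - vhat)) 2 (ℙ : Measure Ω) := A.comp_memLp' he2
  have hDb2 : MemLp (fun ω => b ω - bbar) 2 (ℙ : Measure Ω) := hb.sub (memLp_const bbar)
  have hDH2 : MemLp (fun ω => H ω - Hbar) 2 (ℙ : Measure Ω) := hH.sub (memLp_const Hbar)
  have hHint : Integrable H ℙ := hH.integrable one_le_two
  have hbint : Integrable b ℙ := hb.integrable one_le_two
  have hWmeas : AEStronglyMeasurable (fun ω => (H ω - Hbar) (v ω)) (ℙ : Measure Ω) := by
    have hc : Continuous fun p : ((EuclideanSpace ℝ (Fin q)) →L[ℝ] (EuclideanSpace ℝ (Fin q))) × (EuclideanSpace ℝ (Fin q)) => p.1 p.2 :=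
      isBoundedBilinearMap_apply.continuous
    exact hc.comp_aestronglyMeasurable (hDH2.1.prodMk hvMeas)
  have hW2 : MemLp (fun ω => (H ω - Hbar) (v ω)) 2 (ℙ : Measure Ω) := by
    refine MemLp.of_le_mul (c := M / μ) hDH2 hWmeas ?_
    filter_upwards [hvBound] with ω hω
    calc ‖(H ω - Hbar) (v ω)‖ ≤ ‖H ω - Hbar‖ * ‖v ω‖ := (H ω - Hbar).le_opNorm (v ω)
      _ ≤ ‖H ω - Hbar‖ * (M / μ) := mul_le_mul_of_nonneg_left hω (norm_nonneg _)
      _ = (M / μ) * ‖H ω - Hbar‖ := mul_comm _ _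
  -- integrability of all six terms
  have hint_e : Integrable (fun ω => ‖v ω - vhat‖ ^ 2) ℙ :=
    (memLp_two_iff_integrable_sq_norm he2.1).mp he2
  have hint_f1 : Integrable (fun ω => ‖A (v ω - vhat)‖ ^ 2) ℙ :=
    (memLp_two_iff_integrable_sq_norm hAe2.1).mp hAe2
  have hint_f2 : Integrable (fun ω => ‖b ω - bbar‖ ^ 2) ℙ :=
    (memLp_two_iff_integrable_sq_norm hDb2.1).mp hDb2
  have hint_f3 : Integrable (fun ω => ‖(H ω - Hbar) (v ω)‖ ^ 2) ℙ :=
    (memLp_two_iff_integrable_sq_norm hW2.1).mp hW2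
  have hint_DH : Integrable (fun ω => ‖H ω - Hbar‖ ^ 2) ℙ :=
    (memLp_two_iff_integrable_sq_norm hDH2.1).mp hDH2
  have hint_g1 : Integrable (fun ω => ⟪A (v ω - vhat), b ω - bbar⟫) ℙ :=
    my_integrable_inner hAe2 hDb2
  have hint_g2 : Integrable (fun ω => ⟪A (v ω - vhat), (H ω - Hbar) (v ω)⟫) ℙ :=
    my_integrable_inner hAe2 hW2
  have hint_g3 : Integrable (fun ω => ⟪b ω - bbar, (H ω - Hbar) (v ω)⟫) ℙ :=
    my_integrable_inner hDb2 hW2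
  -- pointwise decomposition
  have hHb : Hbar vhat = bbar := by
    rw [hvhat]
    have h : (Hbar.comp Hinv) bbar = (1 : (EuclideanSpace ℝ (Fin q)) →L[ℝ] (EuclideanSpace ℝ (Fin q))) bbar := by rw [hInv₁]
    simpa using h
  have hXeq : ∀ ω, ((1 - η • H ω) (v ω) + η • b ω) - vhat
      = A (v ω - vhat) + η • (b ω - bbar) + (-η) • ((H ω - Hbar) (v ω)) := by
    intro ω
    rw [hA]
    simp only [ContinuousLinearMap.sub_apply, ContinuousLinearMap.one_apply,
      ContinuousLinearMap.smul_apply, map_sub]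
    rw [hHb]
    module
  have hnorm : ∀ ω, ‖((1 - η • H ω) (v ω) + η • b ω) - vhat‖ ^ 2
      = ‖A (v ω - vhat)‖ ^ 2 + η ^ 2 * ‖b ω - bbar‖ ^ 2
        + η ^ 2 * ‖(H ω - Hbar) (v ω)‖ ^ 2
        + 2 * η * ⟪A (v ω - vhat), b ω - bbar⟫
        - 2 * η * ⟪A (v ω - vhat), (H ω - Hbar) (v ω)⟫
        - 2 * η ^ 2 * ⟪b ω - bbar, (H ω - Hbar) (v ω)⟫ := by
    intro ω
    rw [hXeq ω, norm_add_sq_real, norm_add_sq_real, inner_add_left]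
    simp only [norm_smul, Real.norm_eq_abs, real_inner_smul_left, real_inner_smul_right,
      mul_pow, sq_abs]
    ring
  -- splitting the integral
  have hsplit : ∫ ω, ‖((1 - η • H ω) (v ω) + η • b ω) - vhat‖ ^ 2
      = (∫ ω, ‖A (v ω - vhat)‖ ^ 2) + η ^ 2 * (∫ ω, ‖b ω - bbar‖ ^ 2)
        + η ^ 2 * (∫ ω, ‖(H ω - Hbar) (v ω)‖ ^ 2)
        + 2 * η * (∫ ω, ⟪A (v ω - vhat), b ω - bbar⟫)
        - 2 * η * (∫ ω, ⟪A (v ω - vhat), (H ω - Hbar) (v ω)⟫)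
        - 2 * η ^ 2 * (∫ ω, ⟪b ω - bbar, (H ω - Hbar) (v ω)⟫) := by
    rw [integral_congr_ae (Filter.Eventually.of_forall hnorm)]
    have i2 := hint_f2.const_mul (η ^ 2)
    have i3 := hint_f3.const_mul (η ^ 2)
    have i4 := hint_g1.const_mul (2 * η)
    have i5 := hint_g2.const_mul (2 * η)
    have i6 := hint_g3.const_mul (2 * η ^ 2)
    have i12 : Integrable (fun ω => ‖A (v ω - vhat)‖ ^ 2 + η ^ 2 * ‖b ω - bbar‖ ^ 2) ℙ :=
      hint_f1.add i2
    have i123 : Integrable (fun ω => ‖A (v ω - vhat)‖ ^ 2 + η ^ 2 * ‖b ω - bbar‖ ^ 2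
        + η ^ 2 * ‖(H ω - Hbar) (v ω)‖ ^ 2) ℙ := i12.add i3
    have i1234 : Integrable (fun ω => ‖A (v ω - vhat)‖ ^ 2 + η ^ 2 * ‖b ω - bbar‖ ^ 2
        + η ^ 2 * ‖(H ω - Hbar) (v ω)‖ ^ 2
        + 2 * η * ⟪A (v ω - vhat), b ω - bbar⟫) ℙ := i123.add i4
    have i12345 : Integrable (fun ω => ‖A (v ω - vhat)‖ ^ 2 + η ^ 2 * ‖b ω - bbar‖ ^ 2
        + η ^ 2 * ‖(H ω - Hbar) (v ω)‖ ^ 2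
        + 2 * η * ⟪A (v ω - vhat), b ω - bbar⟫
        - 2 * η * ⟪A (v ω - vhat), (H ω - Hbar) (v ω)⟫) ℙ := i1234.sub i5
    rw [integral_sub i12345 i6, integral_sub i1234 i5, integral_add i123 i4,
      integral_add i12 i3, integral_add hint_f1 i2,
      integral_const_mul, integral_const_mul, integral_const_mul, integral_const_mul,
      integral_const_mul]
  -- mean-zero entries
  have hDbzero : ∀ i : Fin q, ∫ ω, (b ω - bbar) i = 0 := by
    intro i
    have h1 : Integrable (fun ω => (EuclideanSpace.proj (𝕜 := ℝ) i) (b ω)) ℙ :=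
      (EuclideanSpace.proj (𝕜 := ℝ) i).integrable_comp hbint
    have heq : (fun ω => (b ω - bbar) i)
        = fun ω => (EuclideanSpace.proj (𝕜 := ℝ) i) (b ω)
            - (EuclideanSpace.proj (𝕜 := ℝ) i) bbar := by
      funext ω; simp
    rw [heq, integral_sub h1 (integrable_const _), integral_const, probReal_univ, one_smul, (EuclideanSpace.proj (𝕜 := ℝ) i).integral_comp_comm hbint,
      hbmean, sub_self]
  have hDHzero : ∀ i j : Fin q,
      ∫ ω, ((H ω - Hbar) (EuclideanSpace.single j 1)) i = 0 := by
    intro i j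
    have h1 : Integrable (fun ω => (H ω) (EuclideanSpace.single j (1:ℝ))) ℙ :=
      hHint.apply_continuousLinearMap _
    have h2 : Integrable (fun ω => (EuclideanSpace.proj (𝕜 := ℝ) i)
        ((H ω) (EuclideanSpace.single j (1:ℝ)))) ℙ :=
      (EuclideanSpace.proj (𝕜 := ℝ) i).integrable_comp h1
    have heq : (fun ω => ((H ω - Hbar) (EuclideanSpace.single j (1:ℝ))) i)
        = fun ω => (EuclideanSpace.proj (𝕜 := ℝ) i) ((H ω) (EuclideanSpace.single j 1))
            - (EuclideanSpace.proj (𝕜 := ℝ) i) (Hbar (EuclideanSpace.single j 1)) := by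
      funext ω; simp
    rw [heq, integral_sub h2 (integrable_const _), integral_const, probReal_univ, one_smul,
      (EuclideanSpace.proj (𝕜 := ℝ) i).integral_comp_comm h1,
      ← ContinuousLinearMap.integral_apply hHint, hHmean, sub_self]
  -- independence consequences
  have hvb : IndepFun v b ℙ := (hIndep₂.comp measurable_snd measurable_id).symm
  have hvH : IndepFun v H ℙ := (hIndep₂.comp measurable_fst measurable_id).symm
  have hbH : IndepFun b H ℙ := hIndep₁.symm
  have hvHb : IndepFun v (fun ω => (H ω, b ω)) ℙ := hIndep₂.symm
  -- measurability of coordinate maps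
  have hφmeas : ∀ i : Fin q, Measurable (fun x : (EuclideanSpace ℝ (Fin q)) => A (x - vhat) i) := by
    intro i
    exact ((EuclideanSpace.proj (𝕜 := ℝ) i).continuous.comp
      (A.continuous.comp (continuous_id.sub continuous_const))).measurable
  have hcoordmeas : ∀ i : Fin q, Measurable (fun x : (EuclideanSpace ℝ (Fin q)) => x i) := by
    intro i
    exact (EuclideanSpace.proj (𝕜 := ℝ) i).continuous.measurable
  have hψbmeas : ∀ i : Fin q, Measurable (fun y : (EuclideanSpace ℝ (Fin q)) => (y - bbar) i) := by
    intro i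
    exact ((EuclideanSpace.proj (𝕜 := ℝ) i).continuous.comp
      (continuous_id.sub continuous_const)).measurable
  have hentmeas : ∀ i j : Fin q,
      Measurable (fun T : (EuclideanSpace ℝ (Fin q)) →L[ℝ] (EuclideanSpace ℝ (Fin q)) => ((T - Hbar) (EuclideanSpace.single j (1:ℝ))) i) := by
    intro i j
    exact ((EuclideanSpace.proj (𝕜 := ℝ) i).continuous.comp
      (((ContinuousLinearMap.apply ℝ (EuclideanSpace ℝ (Fin q)) (EuclideanSpace.single j (1:ℝ))).continuous).comp
        (continuous_id.sub continuous_const))).measurable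
  -- ℒ² coordinates
  have hAei2 : ∀ i : Fin q, MemLp (fun ω => A (v ω - vhat) i) 2 (ℙ : Measure Ω) := by
    intro i
    exact ((EuclideanSpace.proj (𝕜 := ℝ) i).comp A).comp_memLp' he2
  have hvj2 : ∀ j : Fin q, MemLp (fun ω => v ω j) 2 (ℙ : Measure Ω) := by
    intro j
    exact (EuclideanSpace.proj (𝕜 := ℝ) j).comp_memLp' hv2
  have hDbi2 : ∀ i : Fin q, MemLp (fun ω => (b ω - bbar) i) 2 (ℙ : Measure Ω) := by
    intro i
    exact (EuclideanSpace.proj (𝕜 := ℝ) i).comp_memLp' hDb2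
  have hent2 : ∀ i j : Fin q,
      MemLp (fun ω => ((H ω - Hbar) (EuclideanSpace.single j (1:ℝ))) i) 2 (ℙ : Measure Ω) := by
    intro i j
    exact ((EuclideanSpace.proj (𝕜 := ℝ) i).comp
      (ContinuousLinearMap.apply ℝ (EuclideanSpace ℝ (Fin q)) (EuclideanSpace.single j (1:ℝ)))).comp_memLp' hDH2
  -- bounded product coordinates (for Z2)
  have hφv2 : ∀ i j : Fin q,
      MemLp (fun ω => A (v ω - vhat) i * v ω j) 2 (ℙ : Measure Ω) := by
    intro i j
    refine MemLp.of_bound ((hAei2 i).1.mul (hvj2 j).1) ((‖A‖ * (M / μ + ‖vhat‖)) * (M / μ)) ?_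
    filter_upwards [hvBound] with ω hω
    have h1 : |A (v ω - vhat) i| ≤ ‖A‖ * (M / μ + ‖vhat‖) := by
      calc |A (v ω - vhat) i| ≤ ‖A (v ω - vhat)‖ := coord_abs_le_norm _ _
        _ ≤ ‖A‖ * ‖v ω - vhat‖ := A.le_opNorm _
        _ ≤ ‖A‖ * (M / μ + ‖vhat‖) := by
            refine mul_le_mul_of_nonneg_left ?_ (norm_nonneg _)
            calc ‖v ω - vhat‖ ≤ ‖v ω‖ + ‖vhat‖ := norm_sub_le _ _
              _ ≤ M / μ + ‖vhat‖ := by linarith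
    have h2 : |v ω j| ≤ M / μ := le_trans (coord_abs_le_norm _ _) hω
    have h3 : 0 ≤ |A (v ω - vhat) i| := abs_nonneg _
    calc ‖A (v ω - vhat) i * v ω j‖ = |A (v ω - vhat) i| * |v ω j| := by
          rw [Real.norm_eq_abs, abs_mul]
      _ ≤ (‖A‖ * (M / μ + ‖vhat‖)) * (M / μ) :=
          mul_le_mul h1 h2 (abs_nonneg _) (le_trans h3 h1)
  -- Z1 : cross term ⟪A e, Δb⟫ has zero mean
  have hg1 : ∫ ω, ⟪A (v ω - vhat), b ω - bbar⟫ = 0 := by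
    have hrw : ∀ ω, ⟪A (v ω - vhat), b ω - bbar⟫
        = ∑ i, A (v ω - vhat) i * (b ω - bbar) i := by
      intro ω
      rw [PiLp.inner_apply]
      simp [RCLike.inner_apply]
      exact Finset.sum_congr rfl fun i _ => mul_comm _ _
    simp only [hrw]
    rw [integral_finset_sum _ fun i _ => my_integrable_mul (hAei2 i) (hDbi2 i)]
    refine Finset.sum_eq_zero fun i _ => ?_
    exact my_cross_zero v b (fun x : (EuclideanSpace ℝ (Fin q)) => A (x - vhat) i) (fun y : (EuclideanSpace ℝ (Fin q)) => (y - bbar) i)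
      hvb (hφmeas i) (hψbmeas i)
      (((hAei2 i)).integrable one_le_two) ((hDbi2 i).integrable one_le_two) (hDbzero i)
  -- Z2 : cross term ⟪A e, ΔH v⟫ has zero mean
  have hg2 : ∫ ω, ⟪A (v ω - vhat), (H ω - Hbar) (v ω)⟫ = 0 := by
    have hrw : ∀ ω, ⟪A (v ω - vhat), (H ω - Hbar) (v ω)⟫
        = ∑ i, ∑ j, (A (v ω - vhat) i * v ω j)
            * ((H ω - Hbar) (EuclideanSpace.single j 1)) i := by
      intro ω
      rw [PiLp.inner_apply]
      refine Finset.sum_congr rfl fun i _ => ?_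
      simp only [RCLike.inner_apply, conj_trivial]
      rw [apply_coord (H ω - Hbar) (v ω) i, Finset.sum_mul]
      refine Finset.sum_congr rfl fun j _ => ?_
      ring
    simp only [hrw]
    rw [integral_finset_sum _ fun i _ => integrable_finset_sum _ fun j _ =>
      my_integrable_mul (hφv2 i j) (hent2 i j)]
    refine Finset.sum_eq_zero fun i _ => ?_
    rw [integral_finset_sum _ fun j _ => my_integrable_mul (hφv2 i j) (hent2 i j)]
    refine Finset.sum_eq_zero fun j _ => ?_
    exact my_cross_zero v H (fun x : (EuclideanSpace ℝ (Fin q)) => A (x - vhat) i * x j)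
      (fun T : (EuclideanSpace ℝ (Fin q)) →L[ℝ] (EuclideanSpace ℝ (Fin q)) => ((T - Hbar) (EuclideanSpace.single j 1)) i)
      hvH ((hφmeas i).mul (hcoordmeas j)) (hentmeas i j)
      ((hφv2 i j).integrable one_le_two) ((hent2 i j).integrable one_le_two) (hDHzero i j)
  -- Z3 : cross term ⟪Δb, ΔH v⟫ has zero mean
  have hg3 : ∫ ω, ⟪b ω - bbar, (H ω - Hbar) (v ω)⟫ = 0 := by
    have hrw : ∀ ω, ⟪b ω - bbar, (H ω - Hbar) (v ω)⟫
        = ∑ i, ∑ j, v ω j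
            * ((b ω - bbar) i * ((H ω - Hbar) (EuclideanSpace.single j 1)) i) := by
      intro ω
      rw [PiLp.inner_apply]
      refine Finset.sum_congr rfl fun i _ => ?_
      simp only [RCLike.inner_apply, conj_trivial]
      rw [apply_coord (H ω - Hbar) (v ω) i, Finset.sum_mul]
      refine Finset.sum_congr rfl fun j _ => ?_
      ring
    have hvbd : ∀ j : Fin q, ∀ᵐ ω, ‖v ω j‖ ≤ M / μ := by
      intro j
      filter_upwards [hvBound] with ω hω
      rw [Real.norm_eq_abs]
      exact le_trans (coord_abs_le_norm _ _) hω
    have hprodint : ∀ i j : Fin q, Integrable (fun ω => v ω j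
        * ((b ω - bbar) i * ((H ω - Hbar) (EuclideanSpace.single j 1)) i)) ℙ := by
      intro i j
      exact (my_integrable_mul (hDbi2 i) (hent2 i j)).bdd_mul (hvj2 j).1 (hvbd j)
    have hpairmeas : ∀ i j : Fin q, Measurable (fun p : ((EuclideanSpace ℝ (Fin q)) →L[ℝ] (EuclideanSpace ℝ (Fin q))) × (EuclideanSpace ℝ (Fin q)) =>
        (p.2 - bbar) i * ((p.1 - Hbar) (EuclideanSpace.single j (1:ℝ))) i) := by
      intro i j
      have hc : Continuous (fun p : ((EuclideanSpace ℝ (Fin q)) →L[ℝ] (EuclideanSpace ℝ (Fin q))) × (EuclideanSpace ℝ (Fin q)) =>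
          (p.2 - bbar) i * ((p.1 - Hbar) (EuclideanSpace.single j (1:ℝ))) i) := by
        refine Continuous.mul ?_ ?_
        · exact (EuclideanSpace.proj (𝕜 := ℝ) i).continuous.comp
            (continuous_snd.sub continuous_const)
        · exact (EuclideanSpace.proj (𝕜 := ℝ) i).continuous.comp
            (((ContinuousLinearMap.apply ℝ (EuclideanSpace ℝ (Fin q)) (EuclideanSpace.single j (1:ℝ))).continuous).comp
              (continuous_fst.sub continuous_const))
      exact hc.measurable
    have hinner0 : ∀ i j : Fin q,
        ∫ ω, (b ω - bbar) i * ((H ω - Hbar) (EuclideanSpace.single j 1)) i = 0 := by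
      intro i j
      exact my_cross_zero b H (fun y : (EuclideanSpace ℝ (Fin q)) => (y - bbar) i)
        (fun T : (EuclideanSpace ℝ (Fin q)) →L[ℝ] (EuclideanSpace ℝ (Fin q)) => ((T - Hbar) (EuclideanSpace.single j 1)) i)
        hbH (hψbmeas i) (hentmeas i j)
        ((hDbi2 i).integrable one_le_two) ((hent2 i j).integrable one_le_two) (hDHzero i j)
    simp only [hrw]
    rw [integral_finset_sum _ fun i _ => integrable_finset_sum _ fun j _ => hprodint i j]
    refine Finset.sum_eq_zero fun i _ => ?_
    rw [integral_finset_sum _ fun j _ => hprodint i j]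
    refine Finset.sum_eq_zero fun j _ => ?_
    exact my_cross_zero v (fun ω => (H ω, b ω)) (fun x : (EuclideanSpace ℝ (Fin q)) => x j)
      (fun p : ((EuclideanSpace ℝ (Fin q)) →L[ℝ] (EuclideanSpace ℝ (Fin q))) × (EuclideanSpace ℝ (Fin q)) =>
        (p.2 - bbar) i * ((p.1 - Hbar) (EuclideanSpace.single j 1)) i)
      hvHb (hcoordmeas j) (hpairmeas i j)
      ((hvj2 j).integrable one_le_two) (my_integrable_mul (hDbi2 i) (hent2 i j)) (hinner0 i j)
  -- operator contraction bound
  have hHsym : ∀ x y : (EuclideanSpace ℝ (Fin q)), ⟪Hbar x, y⟫ = ⟪x, Hbar y⟫ := fun x y => hSelfAdj.isSymmetric x y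
  have hinnerA : ∀ x : (EuclideanSpace ℝ (Fin q)), ⟪A x, x⟫ = ‖x‖ ^ 2 - η * ⟪Hbar x, x⟫ := by
    intro x
    rw [hA, ContinuousLinearMap.sub_apply, ContinuousLinearMap.one_apply,
      ContinuousLinearMap.smul_apply, inner_sub_left, real_inner_smul_left,
      real_inner_self_eq_norm_sq]
  have hsymmA : ∀ x y : (EuclideanSpace ℝ (Fin q)), ⟪A x, y⟫ = ⟪x, A y⟫ := by
    intro x y
    rw [hA]
    simp only [ContinuousLinearMap.sub_apply, ContinuousLinearMap.one_apply,
      ContinuousLinearMap.smul_apply, inner_sub_left, inner_sub_right,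
      real_inner_smul_left, real_inner_smul_right]
    rw [hHsym x y]
  have hposA : ∀ x : (EuclideanSpace ℝ (Fin q)), 0 ≤ ⟪A x, x⟫ := by
    intro x
    rw [hinnerA]
    nlinarith [hUpper x, mul_le_mul_of_nonneg_left (hUpper x) hη.le,
      mul_le_mul_of_nonneg_right hηL1 (sq_nonneg ‖x‖)]
  have hubA : ∀ x : (EuclideanSpace ℝ (Fin q)), ⟪A x, x⟫ ≤ (1 - η * μ) * ‖x‖ ^ 2 := by
    intro x
    rw [hinnerA]
    nlinarith [mul_le_mul_of_nonneg_left (hLower x) hη.le]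
  have hc1 : 1 - η * μ ≤ 1 := by nlinarith
  have hop : ∀ w : (EuclideanSpace ℝ (Fin q)), ‖A w‖ ^ 2 ≤ (1 - η * μ) * ‖w‖ ^ 2 :=
    symm_op_sq_bound A (1 - η * μ) hsymmA hposA hubA hc1
  -- the three main bounds
  have hf1le : ∫ ω, ‖A (v ω - vhat)‖ ^ 2 ≤ (1 - η * μ) * ∫ ω, ‖v ω - vhat‖ ^ 2 := by
    calc ∫ ω, ‖A (v ω - vhat)‖ ^ 2 ≤ ∫ ω, (1 - η * μ) * ‖v ω - vhat‖ ^ 2 :=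
        integral_mono hint_f1 (hint_e.const_mul _) fun ω => hop (v ω - vhat)
      _ = (1 - η * μ) * ∫ ω, ‖v ω - vhat‖ ^ 2 := integral_const_mul _ _
  have hf3le : ∫ ω, ‖(H ω - Hbar) (v ω)‖ ^ 2 ≤ M ^ 2 / μ ^ 2 * σH ^ 2 := by
    have hptwise : ∀ᵐ ω, ‖(H ω - Hbar) (v ω)‖ ^ 2 ≤ M ^ 2 / μ ^ 2 * ‖H ω - Hbar‖ ^ 2 := by
      filter_upwards [hvBound] with ω hω
      have h2 : ‖(H ω - Hbar) (v ω)‖ ≤ ‖H ω - Hbar‖ * (M / μ) :=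
        le_trans ((H ω - Hbar).le_opNorm (v ω))
          (mul_le_mul_of_nonneg_left hω (norm_nonneg _))
      have h3 : ‖(H ω - Hbar) (v ω)‖ ^ 2 ≤ (‖H ω - Hbar‖ * (M / μ)) ^ 2 :=
        pow_le_pow_left₀ (norm_nonneg _) h2 2
      calc ‖(H ω - Hbar) (v ω)‖ ^ 2 ≤ (‖H ω - Hbar‖ * (M / μ)) ^ 2 := h3
        _ = M ^ 2 / μ ^ 2 * ‖H ω - Hbar‖ ^ 2 := by
            rw [mul_pow, div_pow]; ring
    calc ∫ ω, ‖(H ω - Hbar) (v ω)‖ ^ 2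
        ≤ ∫ ω, M ^ 2 / μ ^ 2 * ‖H ω - Hbar‖ ^ 2 :=
          integral_mono_ae hint_f3 (hint_DH.const_mul _) hptwise
      _ = M ^ 2 / μ ^ 2 * ∫ ω, ‖H ω - Hbar‖ ^ 2 := integral_const_mul _ _
      _ ≤ M ^ 2 / μ ^ 2 * σH ^ 2 := by
          refine mul_le_mul_of_nonneg_left hHVar ?_
          positivity
  -- conclude
  rw [hsplit, hg1, hg2, hg3]
  have hb2 : η ^ 2 * (∫ ω, ‖b ω - bbar‖ ^ 2) ≤ η ^ 2 * σb ^ 2 :=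
    mul_le_mul_of_nonneg_left hbVar (sq_nonneg η)
  have hb3 : η ^ 2 * (∫ ω, ‖(H ω - Hbar) (v ω)‖ ^ 2) ≤ η ^ 2 * (M ^ 2 / μ ^ 2 * σH ^ 2) :=
    mul_le_mul_of_nonneg_left hf3le (sq_nonneg η)
  nlinarith [hf1le, hb2, hb3]
end

section
/- The minimizer map is Lipschitz: for all x₁, x₂ ∈ ℝ^p, ‖y*(x₁) − y*(x₂)‖ ≤ (L/μ)‖x₁ − x₂‖. -/
open InnerProductSpace

variable {E : Type*} [NormedAddCommGroup E] [InnerProductSpace ℝ E] [CompleteSpace E]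

/-- First-order condition for a convex function on univ with a gradient. -/
lemma aux_first_order {F : E → ℝ} (hF : ConvexOn ℝ Set.univ F)
    {x y Gx : E} (hx : HasGradientAt F Gx x) :
    F x + ⟪Gx, y - x⟫_ℝ ≤ F y := by
  have hderiv : HasDerivAt (F ∘ (AffineMap.lineMap x y : ℝ →ᵃ[ℝ] E)) ⟪Gx, y - x⟫_ℝ 0 := by
    have h1 : HasDerivAt (AffineMap.lineMap x y : ℝ → E) (y - x) 0 :=
      AffineMap.hasDerivAt_lineMap
    have h2 : HasFDerivAt F (toDual ℝ E Gx) (AffineMap.lineMap x y (0:ℝ)) := by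
      simpa [AffineMap.lineMap_apply_module'] using
        (hasGradientAt_iff_hasFDerivAt.mp hx)
    simpa [toDual_apply_apply] using h2.comp_hasDerivAt 0 h1
  have hconv : ConvexOn ℝ Set.univ (F ∘ (AffineMap.lineMap x y : ℝ →ᵃ[ℝ] E)) := by
    simpa using hF.comp_affineMap (AffineMap.lineMap x y)
  have := hconv.le_slope_of_hasDerivAt (Set.mem_univ (0:ℝ)) (Set.mem_univ 1) one_pos hderiv
  simp only [slope_def_field, Function.comp_apply, AffineMap.lineMap_apply_module'] at this
  simp only [one_smul, zero_smul, zero_add, sub_zero, div_one, sub_add_cancel] at this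
  linarith

/-- Strong monotonicity of the gradient of a strongly convex function. -/
lemma aux_strong_mono {m : ℝ} {f : E → ℝ} (hf : StrongConvexOn Set.univ m f)
    {a b Ga Gb : E} (ha : HasGradientAt f Ga a) (hb : HasGradientAt f Gb b) :
    m * ‖a - b‖ ^ 2 ≤ ⟪Ga - Gb, a - b⟫_ℝ := by
  set F : E → ℝ := fun z => f z - m / 2 * ‖z‖ ^ 2 with hFdef
  have hFconv : ConvexOn ℝ Set.univ F := strongConvexOn_iff_convex.mp hf
  have hgradF : ∀ (z Gz : E), HasGradientAt f Gz z → HasGradientAt F (Gz - (m/2) • (2 • z)) z := by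
    intro z Gz hz
    rw [hasGradientAt_iff_hasFDerivAt]
    have h2 : HasFDerivAt (fun w : E => ‖w‖ ^ 2) (2 • (innerSL ℝ z)) z :=
      (hasStrictFDerivAt_norm_sq z).hasFDerivAt
    have := (hasGradientAt_iff_hasFDerivAt.mp hz).sub (h2.const_smul (m/2))
    convert this using 1
    · rfl
    · rfl
    · rfl
    ext w
    simp [inner_sub_left, inner_smul_left, real_inner_smul_left, two_smul, inner_add_left]
  have hFa := hgradF a Ga ha
  have hFb := hgradF b Gb hb
  have h1 := aux_first_order hFconv (y := b) hFa
  have h2 := aux_first_order hFconv (y := a) hFb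
  have key : (0:ℝ) ≤ ⟪Ga - (m/2) • (2 • a) - (Gb - (m/2) • (2 • b)), a - b⟫_ℝ := by
    have : ⟪Ga - (m/2) • (2 • a), b - a⟫_ℝ + ⟪Gb - (m/2) • (2 • b), a - b⟫_ℝ ≤ 0 := by
      linarith
    rw [inner_sub_left]
    have hswap : ⟪Ga - (m/2) • (2 • a), b - a⟫_ℝ = - ⟪Ga - (m/2) • (2 • a), a - b⟫_ℝ := by
      rw [← inner_neg_right]; congr 1; abel
    linarith [hswap ▸ this]
  have expand : ⟪Ga - (m/2) • (2 • a) - (Gb - (m/2) • (2 • b)), a - b⟫_ℝ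
      = ⟪Ga - Gb, a - b⟫_ℝ - m * ‖a - b‖ ^ 2 := by
    have : Ga - (m/2) • (2 • a) - (Gb - (m/2) • (2 • b)) = (Ga - Gb) - m • (a - b) := by
      module
    rw [this, inner_sub_left, real_inner_smul_left, real_inner_self_eq_norm_sq]
  linarith [expand ▸ key]
/-- **Proposition 1 (Lipschitz continuity of the lower-level minimizer map).**
For every `x`, `y ↦ g(x,y)` is `μ`-strongly convex with unique minimizer `y*(x)`,
and `∇_y g` is `L`-Lipschitz jointly in `(x,y)`; then
`‖y*(x₁) − y*(x₂)‖ ≤ (L/μ)‖x₁ − x₂‖` for all `x₁, x₂`. -/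
theorem stmt_15 {p q : ℕ}
    (μ L : ℝ) (hμ : 0 < μ) (hL : 0 < L)
    (g : EuclideanSpace ℝ (Fin p) × EuclideanSpace ℝ (Fin q) → ℝ)
    (gradyg : EuclideanSpace ℝ (Fin p) → EuclideanSpace ℝ (Fin q) → EuclideanSpace ℝ (Fin q))
    (hgrad : ∀ x y, HasGradientAt (fun y' => g (x, y')) (gradyg x y) y)
    (hStrong : ∀ x, StrongConvexOn Set.univ μ (fun y => g (x, y)))
    (ystar : EuclideanSpace ℝ (Fin p) → EuclideanSpace ℝ (Fin q))
    (hmin : ∀ x y, g (x, ystar x) ≤ g (x, y))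
    (hLip : ∀ x₁ x₂ y₁ y₂,
      ‖gradyg x₁ y₁ - gradyg x₂ y₂‖ ≤ L * (‖x₁ - x₂‖ + ‖y₁ - y₂‖)) :
    ∀ x₁ x₂, ‖ystar x₁ - ystar x₂‖ ≤ L / μ * ‖x₁ - x₂‖ := by
  intro x₁ x₂
  set y₁ := ystar x₁
  set y₂ := ystar x₂
  -- gradient vanishes at the minimizer
  have hzero : ∀ x, gradyg x (ystar x) = 0 := by
    intro x
    have hloc : IsLocalMin (fun y => g (x, y)) (ystar x) :=
      Filter.Eventually.of_forall (hmin x)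
    have := hloc.hasFDerivAt_eq_zero (hasGradientAt_iff_hasFDerivAt.mp (hgrad x (ystar x)))
    have h2 : InnerProductSpace.toDual ℝ (EuclideanSpace ℝ (Fin q)) (gradyg x (ystar x)) =
        InnerProductSpace.toDual ℝ (EuclideanSpace ℝ (Fin q)) 0 := by
      simpa using this
    exact (InnerProductSpace.toDual ℝ _).injective h2
  have key := aux_strong_mono (hStrong x₁) (hgrad x₁ y₁) (hgrad x₁ y₂)
  rw [hzero x₁] at key
  have heq : ⟪(0 : EuclideanSpace ℝ (Fin q)) - gradyg x₁ y₂, y₁ - y₂⟫_ℝ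
      = ⟪gradyg x₂ y₂ - gradyg x₁ y₂, y₁ - y₂⟫_ℝ := by
    rw [hzero x₂]
  rw [heq] at key
  have hCS := real_inner_le_norm (gradyg x₂ y₂ - gradyg x₁ y₂) (y₁ - y₂)
  have hlip := hLip x₂ x₁ y₂ y₂
  simp only [sub_self, norm_zero, add_zero] at hlip
  have hbound : μ * ‖y₁ - y₂‖ ^ 2 ≤ L * ‖x₁ - x₂‖ * ‖y₁ - y₂‖ := by
    calc μ * ‖y₁ - y₂‖ ^ 2 ≤ ⟪gradyg x₂ y₂ - gradyg x₁ y₂, y₁ - y₂⟫_ℝ := key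
      _ ≤ ‖gradyg x₂ y₂ - gradyg x₁ y₂‖ * ‖y₁ - y₂‖ := hCS
      _ ≤ L * ‖x₂ - x₁‖ * ‖y₁ - y₂‖ := by
          apply mul_le_mul_of_nonneg_right hlip (norm_nonneg _)
      _ = L * ‖x₁ - x₂‖ * ‖y₁ - y₂‖ := by rw [norm_sub_rev x₂ x₁]
  rcases eq_or_lt_of_le (norm_nonneg (y₁ - y₂)) with h0 | h0
  · rw [← h0]
    positivity
  · rw [sq] at hbound
    have h1 : μ * ‖y₁ - y₂‖ ≤ L * ‖x₁ - x₂‖ := by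
      apply le_of_mul_le_mul_right _ h0
      calc μ * ‖y₁ - y₂‖ * ‖y₁ - y₂‖ = μ * (‖y₁ - y₂‖ * ‖y₁ - y₂‖) := by ring
        _ ≤ L * ‖x₁ - x₂‖ * ‖y₁ - y₂‖ := hbound
    rw [div_mul_eq_mul_div, le_div_iff₀ hμ]
    linarith
end
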